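/- arXiv:1802.04014 — 11 statements merged into one kernel-verified Lean document; each statement's English description precedes it below -/
import Mathlib

section
/- Let G be an (m,d,γ)-spectral expander on a finite vertex set V with |V| = m, in which any two distinct vertices u, v satisfy |Γ(u) ∩ Γ(v)| ≤ 1, let c : V → {0,1} be a balanced coloring of G, and assume m ≥ 1/γ². Then for every b ∈ {0,1} there exists a (1/10, ⌊2·log₂(1/γ)⌋ − 100)-hitting distribution over the b-monochromatic rectangles of the partial function g(G,c). -/
open Finset Matrix

/-- `G` (given by its adjacency matrix `M`, a symmetric matrix of natural numbers; a
self-loop at `v` contributes `1` to `M v v` and to the degree of `v`) is an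
`(m, d, γ)`-spectral expander: it has `m` vertices, it is `d`-regular, and, viewing `M`
as a real symmetric matrix, `d` is an eigenvalue of multiplicity `1` and every other
eigenvalue `λ` satisfies `|λ| ≤ γ·d`. -/
def IsSpectralExpander {V : Type*} [Fintype V] [DecidableEq V]
    (M : Matrix V V ℕ) (m d : ℕ) (γ : ℝ) : Prop :=
  Fintype.card V = m ∧
  (∀ v : V, ∑ u : V, M v u = d) ∧
  ∃ hH : (M.map (Nat.cast : ℕ → ℝ)).IsHermitian,
    (∃! i : V, hH.eigenvalues i = (d : ℝ)) ∧
    (∀ i : V, hH.eigenvalues i ≠ (d : ℝ) → |hH.eigenvalues i| ≤ γ * d)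

/-- The set of common neighbors `Γ(u) ∩ Γ(v)` of `u` and `v` in the multigraph with
adjacency matrix `M`. -/
def commonNeighbors {V : Type*} [Fintype V] [DecidableEq V]
    (M : Matrix V V ℕ) (u v : V) : Finset V :=
  Finset.univ.filter (fun w => 1 ≤ M w u ∧ 1 ≤ M w v)

open Finset

/-- The probability, under a distribution `μ` on rectangles `R = R.1 × R.2 ⊆ α × β`,
that the sampled rectangle intersects `X × Y`. -/
noncomputable def hitProb {α β : Type*} [Fintype α] [Fintype β] [DecidableEq α] [DecidableEq β]
    (μ : Finset α × Finset β → ℝ) (X : Finset α) (Y : Finset β) : ℝ :=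
  ∑ R ∈ Finset.univ.filter
      (fun R : Finset α × Finset β => (R.1 ∩ X).Nonempty ∧ (R.2 ∩ Y).Nonempty), μ R

/-- `μ` is a probability distribution on rectangles of `α × β`. -/
def IsDistribution {α β : Type*} [Fintype α] [Fintype β]
    (μ : Finset α × Finset β → ℝ) : Prop :=
  (∀ R, 0 ≤ μ R) ∧ ∑ R, μ R = 1

/-- `μ` is a `(δ, h)`-hitting distribution: every `X × Y` with
`|X| ≥ 2^(−h)·|α|` and `|Y| ≥ 2^(−h)·|β|` is hit with probability at least `1 − δ`. -/
def IsHitting {α β : Type*} [Fintype α] [Fintype β] [DecidableEq α] [DecidableEq β]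
    (μ : Finset α × Finset β → ℝ) (δ : ℝ) (h : ℤ) : Prop :=
  ∀ X : Finset α, ∀ Y : Finset β,
    (2 : ℝ) ^ (-h) * (Fintype.card α : ℝ) ≤ X.card →
    (2 : ℝ) ^ (-h) * (Fintype.card β : ℝ) ≤ Y.card →
    1 - δ ≤ hitProb μ X Y

/-- The coloring `c : V → {0,1}` is balanced: each color class has size at least `|V|/3`,
i.e. `|V|/3 ≤ |c⁻¹(1)| ≤ 2|V|/3`. -/
def BalancedColoring {V : Type*} [Fintype V] (c : V → Bool) : Prop :=
  Fintype.card V ≤ 3 * (Finset.univ.filter (fun v => c v = true)).card ∧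
  3 * (Finset.univ.filter (fun v => c v = true)).card ≤ 2 * Fintype.card V

/-- The rectangle `R = R.1 × R.2` is `b`-monochromatic for the partial function `g(G,c)`:
at every point `(u, v)` of the rectangle, `g(G,c)` is defined (i.e. `u ≠ v` and `u, v`
have a common neighbor) with value `b` (i.e. some common neighbor — which is unique by
assumption — has color `b`). -/
def MonoRectangle {V : Type*} [Fintype V] [DecidableEq V]
    (M : Matrix V V ℕ) (c : V → Bool) (b : Bool) (R : Finset V × Finset V) : Prop :=
  ∀ u ∈ R.1, ∀ v ∈ R.2, u ≠ v ∧ ∃ w ∈ commonNeighbors M u v, c w = b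

/-!
The distribution picks a vertex `w` of colour `b` uniformly, splits its neighbourhood `N(w)`
uniformly at random as `A ⊔ (N(w) \ A)` and outputs `A × (N(w) \ A)`: every point of this
rectangle has the common neighbour `w`, of colour `b`. If `N(w)` meets both `X` and `Y` in at
least `5` vertices, the random split hits `X × Y` with probability at least `15/16`. The expander
mixing lemma shows that edge-free pairs `S, T` satisfy `|S||T| ≤ (γm)²`; a vertex with fewer than
`5` neighbours in `X` misses a whole part of an equipartition of `X` into `5` parts, so for
`|X| ≥ 2¹⁰⁰γ²m` only a `2⁻⁹⁴` fraction of the vertices is bad. As the colour class has at least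
`m/3` vertices, the bad vertices cost almost nothing.
-/

theorem Finset.sq_sum_mul_mul_le {ι : Type*} (s : Finset ι) (w f g : ι → ℝ) {c : ℝ}
    (hw : ∀ i ∈ s, |w i| ≤ c) :
    (∑ i ∈ s, w i * (f i * g i)) ^ 2 ≤ c ^ 2 * ((∑ i ∈ s, f i ^ 2) * ∑ i ∈ s, g i ^ 2) := by
  calc (∑ i ∈ s, w i * (f i * g i)) ^ 2 = (∑ i ∈ s, w i * f i * g i) ^ 2 := by
        simp only [mul_assoc]
    _ ≤ (∑ i ∈ s, (w i * f i) ^ 2) * ∑ i ∈ s, g i ^ 2 := sum_mul_sq_le_sq_mul_sq _ _ _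
    _ ≤ (∑ i ∈ s, c ^ 2 * f i ^ 2) * ∑ i ∈ s, g i ^ 2 := by
        gcongr with i hi
        rw [mul_pow]
        exact mul_le_mul_of_nonneg_right
          (sq_le_sq' (abs_le.1 (hw i hi)).1 (abs_le.1 (hw i hi)).2) (sq_nonneg _)
    _ = _ := by rw [← mul_sum, mul_assoc]

namespace Matrix.IsHermitian

variable {n : Type*} [Fintype n] [DecidableEq n] {A : Matrix n n ℝ} (hA : A.IsHermitian)
include hA

theorem mulVec_dotProduct_eigenvectorBasis (x : n → ℝ) (j : n) :
    A *ᵥ x ⬝ᵥ hA.eigenvectorBasis j = hA.eigenvalues j * (x ⬝ᵥ hA.eigenvectorBasis j) := by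
  have hT : Aᵀ = A := by simpa [conjTranspose_eq_transpose_of_trivial] using hA.eq
  rw [dotProduct_comm, dotProduct_mulVec, ← mulVec_transpose, hT, mulVec_eigenvectorBasis,
    smul_dotProduct, dotProduct_comm, smul_eq_mul]

theorem sum_dotProduct_eigenvectorBasis_mul (x y : n → ℝ) :
    ∑ j, (x ⬝ᵥ hA.eigenvectorBasis j) * (y ⬝ᵥ hA.eigenvectorBasis j) = x ⬝ᵥ y := by
  have := hA.eigenvectorBasis.sum_inner_mul_inner (WithLp.toLp 2 x) (WithLp.toLp 2 y)
  simpa [EuclideanSpace.inner_eq_star_dotProduct, dotProduct_comm] using this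

theorem dotProduct_mulVec_eq_sum (x y : n → ℝ) :
    x ⬝ᵥ A *ᵥ y = ∑ j, hA.eigenvalues j *
      ((x ⬝ᵥ hA.eigenvectorBasis j) * (y ⬝ᵥ hA.eigenvectorBasis j)) := by
  rw [← hA.sum_dotProduct_eigenvectorBasis_mul]
  simp only [hA.mulVec_dotProduct_eigenvectorBasis, mul_left_comm]

theorem dotProduct_eigenvectorBasis_eq_zero {v : n → ℝ} {μ : ℝ} (hv : A *ᵥ v = μ • v) {j : n}
    (hj : hA.eigenvalues j ≠ μ) : v ⬝ᵥ hA.eigenvectorBasis j = 0 := by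
  have := hA.mulVec_dotProduct_eigenvectorBasis v j
  rw [hv, smul_dotProduct, smul_eq_mul] at this
  have h0 : (hA.eigenvalues j - μ) * (v ⬝ᵥ hA.eigenvectorBasis j) = 0 := by linarith
  exact (mul_eq_zero.mp h0).resolve_left (sub_ne_zero.mpr hj)

end Matrix.IsHermitian

theorem Finpartition.card_parts_le_card_inter {α : Type*} [DecidableEq α] {s : Finset α}
    (P : Finpartition s) {t : Finset α} (ht : ∀ Q ∈ P.parts, (t ∩ Q).Nonempty) :
    #P.parts ≤ #(t ∩ s) := by
  refine (card_le_card fun Q hQ => ?_).trans (card_image_le (f := P.part))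
  obtain ⟨a, ha⟩ := ht Q hQ
  rw [mem_inter] at ha
  exact mem_image.2 ⟨a, mem_inter.2 ⟨ha.1, P.le hQ ha.2⟩, P.part_eq_of_mem hQ ha.2⟩

theorem Finset.two_pow_card_le_card_filter_add {α : Type*} [DecidableEq α] (N X Y : Finset α) :
    2 ^ #N ≤ #{A ∈ N.powerset | (A ∩ X).Nonempty ∧ ((N \ A) ∩ Y).Nonempty}
      + 2 ^ #(N \ X) + 2 ^ #(N \ Y) := by
  have hcover : N.powerset ⊆ {A ∈ N.powerset | (A ∩ X).Nonempty ∧ ((N \ A) ∩ Y).Nonempty}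
      ∪ (N \ X).powerset ∪ (N \ Y).powerset.image (N \ ·) := by
    intro A hA
    have hAN := mem_powerset.1 hA
    by_cases hX : (A ∩ X).Nonempty
    · by_cases hY : ((N \ A) ∩ Y).Nonempty
      · exact mem_union_left _ (mem_union_left _ (mem_filter.2 ⟨hA, hX, hY⟩))
      · refine mem_union_right _ (mem_image.2 ⟨N \ A, ?_, sdiff_sdiff_eq_self hAN⟩)
        rw [mem_powerset, subset_sdiff]
        exact ⟨sdiff_subset, disjoint_iff_inter_eq_empty.2 (not_nonempty_iff_eq_empty.1 hY)⟩
    · refine mem_union_left _ (mem_union_right _ ?_)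
      rw [mem_powerset, subset_sdiff]
      exact ⟨hAN, disjoint_iff_inter_eq_empty.2 (not_nonempty_iff_eq_empty.1 hX)⟩
  calc 2 ^ #N = #N.powerset := (card_powerset N).symm
    _ ≤ _ := (card_le_card hcover).trans ((card_union_le _ _).trans
        (add_le_add (card_union_le _ _) card_image_le))
    _ = _ := by simp only [card_powerset]

theorem Finset.one_sub_le_card_filter_div {α : Type*} [DecidableEq α] (N X Y : Finset α) (k : ℕ) :
    1 - 2 / 2 ^ k - (if #(N ∩ X) < k then 1 else 0) - (if #(N ∩ Y) < k then 1 else 0)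
      ≤ (#{A ∈ N.powerset | (A ∩ X).Nonempty ∧ ((N \ A) ∩ Y).Nonempty} : ℝ) / 2 ^ #N := by
  have hmiss : ∀ Z : Finset α,
      (2 : ℝ) ^ #(N \ Z) ≤ 2 ^ #N * (1 / 2 ^ k + if #(N ∩ Z) < k then 1 else 0) := by
    intro Z
    have hsplit := card_inter_add_card_sdiff N Z
    split_ifs with hZ
    · have : (2 : ℝ) ^ #(N \ Z) ≤ 2 ^ #N := pow_le_pow_right₀ one_le_two (by omega)
      have : (0 : ℝ) ≤ 2 ^ #N * (1 / 2 ^ k) := by positivity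
      linarith
    · rw [add_zero, mul_one_div, le_div_iff₀ (by positivity), ← pow_add, ← hsplit, add_comm]
      exact pow_le_pow_right₀ one_le_two (by omega)
  have hcount := two_pow_card_le_card_filter_add N X Y
  rw [le_div_iff₀ (by positivity)]
  have hcount' : (2 : ℝ) ^ #N ≤ #{A ∈ N.powerset | (A ∩ X).Nonempty ∧ ((N \ A) ∩ Y).Nonempty}
      + 2 ^ #(N \ X) + 2 ^ #(N \ Y) := by exact_mod_cast hcount
  linear_combination hcount' + hmiss X + hmiss Y

def neighbors {V : Type*} [Fintype V] (M : Matrix V V ℕ) (w : V) : Finset V :=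
  univ.filter fun u => 1 ≤ M w u

namespace IsSpectralExpander

variable {V : Type*} [Fintype V] [DecidableEq V] {M : Matrix V V ℕ} {m d : ℕ} {γ : ℝ}

/-- The expander mixing lemma `|d⟨x,1⟩⟨y,1⟩/m - ⟨x,Ay⟩| ≤ γd‖x‖‖y‖`, squared and multiplied
by `m`. -/
theorem sq_sub_le (h : IsSpectralExpander M m d γ) (x y : V → ℝ) :
    (d * (x ⬝ᵥ 1) * (y ⬝ᵥ 1) - m * (x ⬝ᵥ M.map (↑) *ᵥ y)) ^ 2
      ≤ (γ * d * m) ^ 2 * ((x ⬝ᵥ x) * (y ⬝ᵥ y)) := by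
  obtain ⟨hcard, hreg, hA, ⟨i₀, hi₀, huniq⟩, hbound⟩ := h
  set κ : (V → ℝ) → V → ℝ := fun z j => z ⬝ᵥ hA.eigenvectorBasis j with hκ
  have hrow : M.map (↑) *ᵥ (1 : V → ℝ) = (d : ℝ) • 1 := by
    ext v
    simp [mulVec, dotProduct, ← hreg v]
  have hκ1 : ∀ j ≠ i₀, κ 1 j = 0 := fun j hj =>
    hA.dotProduct_eigenvectorBasis_eq_zero hrow fun h => hj (huniq j h)
  have hpar : ∀ z, z ⬝ᵥ 1 = κ z i₀ * κ 1 i₀ := fun z => by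
    rw [← hA.sum_dotProduct_eigenvectorBasis_mul,
      sum_eq_single_of_mem i₀ (mem_univ _) fun j _ hj => mul_eq_zero_of_right _ (hκ1 j hj)]
  have hm : (m : ℝ) = κ 1 i₀ ^ 2 := by
    rw [sq, ← hpar]
    simp [hcard]
  have hexpand : x ⬝ᵥ M.map (↑) *ᵥ y = d * (κ x i₀ * κ y i₀) +
      ∑ j ∈ univ.erase i₀, hA.eigenvalues j * (κ x j * κ y j) := by
    rw [hA.dotProduct_mulVec_eq_sum, ← add_sum_erase _ _ (mem_univ i₀), hi₀]
  have hrest : (∑ j ∈ univ.erase i₀, hA.eigenvalues j * (κ x j * κ y j)) ^ 2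
      ≤ (γ * d) ^ 2 * ((x ⬝ᵥ x) * (y ⬝ᵥ y)) := by
    calc _ ≤ (γ * d) ^ 2 * ((∑ j ∈ univ.erase i₀, κ x j ^ 2) * ∑ j ∈ univ.erase i₀, κ y j ^ 2) :=
          sq_sum_mul_mul_le _ _ _ _ fun j hj => hbound j fun h => (mem_erase.1 hj).1 (huniq j h)
      _ ≤ (γ * d) ^ 2 * ((∑ j, κ x j ^ 2) * ∑ j, κ y j ^ 2) := by
          gcongr <;> exact subset_univ _
      _ = _ := by simp only [sq, hκ, hA.sum_dotProduct_eigenvectorBasis_mul]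
  calc _ = (m : ℝ) ^ 2 * (∑ j ∈ univ.erase i₀, hA.eigenvalues j * (κ x j * κ y j)) ^ 2 := by
        rw [hpar x, hpar y, hexpand, hm]
        ring
    _ ≤ (m : ℝ) ^ 2 * ((γ * d) ^ 2 * ((x ⬝ᵥ x) * (y ⬝ᵥ y))) := by gcongr
    _ = _ := by ring

theorem degree_pos (h : IsSpectralExpander M m d γ) (hm : 1 < m) : 0 < d := by
  obtain ⟨hcard, hreg, hA, ⟨i₀, -, huniq⟩, -⟩ := h
  by_contra hd
  replace hd : d = 0 := by omega
  have hM : M.map (Nat.cast : ℕ → ℝ) = 0 := by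
    ext v u
    simp [sum_eq_zero_iff.1 ((hreg v).trans hd) u (mem_univ u)]
  have heig : ∀ i, hA.eigenvalues i = d := fun i => by
    simp [hA.eigenvalues_eq_zero_iff.2 hM, hd]
  have : Subsingleton V := ⟨fun i j => (huniq i (heig i)).trans (huniq j (heig j)).symm⟩
  have := Fintype.card_le_one_iff_subsingleton.2 this
  omega

theorem card_mul_card_le_of_forall_eq_zero (h : IsSpectralExpander M m d γ) (hd : 0 < d)
    {S T : Finset V} (hST : ∀ s ∈ S, ∀ t ∈ T, M s t = 0) :
    (#S * #T : ℝ) ≤ (γ * m) ^ 2 := by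
  set x : V → ℝ := fun v => if v ∈ S then 1 else 0
  set y : V → ℝ := fun v => if v ∈ T then 1 else 0
  have hind : ∀ U : Finset V, (fun v => if v ∈ U then (1 : ℝ) else 0) ⬝ᵥ 1 = #U ∧
      (fun v => if v ∈ U then (1 : ℝ) else 0) ⬝ᵥ (fun v => if v ∈ U then (1 : ℝ) else 0) = #U :=
    fun U => by simp [dotProduct]
  have hxy : x ⬝ᵥ M.map (↑) *ᵥ y = 0 := by
    refine sum_eq_zero fun s _ => ?_
    by_cases hs : s ∈ S
    · refine mul_eq_zero_of_right _ (sum_eq_zero fun t _ => ?_)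
      by_cases ht : t ∈ T <;> simp [y, ht, hST s hs t]
    · simp [x, hs]
  have hmix := h.sq_sub_le x y
  rw [hxy, (hind S).1, (hind S).2, (hind T).1, (hind T).2] at hmix
  have hP : (0 : ℝ) ≤ #S * #T := by positivity
  rcases hP.eq_or_lt with h0 | hpos
  · rw [← h0]
    positivity
  · have hd' : (0 : ℝ) < d := by exact_mod_cast hd
    refine le_of_mul_le_mul_left ?_ (by positivity : (0 : ℝ) < d ^ 2 * (#S * #T))
    linear_combination hmix

theorem card_filter_card_inter_lt_mul_le (h : IsSpectralExpander M m d γ) (hd : 0 < d)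
    (X : Finset V) (k : ℕ) :
    (#{w | #(neighbors M w ∩ X) < k} : ℝ) * (#X - k) ≤ k ^ 2 * (γ * m) ^ 2 := by
  classical
  by_cases hkX : k ≤ #X
  swap
  · have : (#X : ℝ) - k ≤ 0 := by
      rw [sub_nonpos]
      exact_mod_cast (not_le.1 hkX).le
    exact (mul_nonpos_of_nonneg_of_nonpos (by positivity) this).trans (by positivity)
  rcases Nat.eq_zero_or_pos k with rfl | hk
  · simp
  obtain ⟨P, hP, hPk⟩ := Finpartition.exists_equipartition_card_eq X hk.ne' hkX
  set B : Finset V → Finset V := fun Q => {w | ∀ x ∈ Q, M w x = 0}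
  have hB : ∀ Q ∈ P.parts, (#(B Q) : ℝ) * (#X / k : ℕ) ≤ (γ * m) ^ 2 := fun Q hQ =>
    (mul_le_mul_of_nonneg_left (by exact_mod_cast hPk ▸ hP.average_le_card_part hQ)
      (by positivity)).trans
      (h.card_mul_card_le_of_forall_eq_zero hd fun w hw x hx => (mem_filter.1 hw).2 x hx)
  have hcover : ({w | #(neighbors M w ∩ X) < k} : Finset V) ⊆ P.parts.biUnion B := by
    intro w hw
    by_contra hnot
    simp only [mem_biUnion, not_exists, not_and, B, mem_filter, mem_univ, true_and,
      not_forall] at hnot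
    have hmeet : ∀ Q ∈ P.parts, (neighbors M w ∩ Q).Nonempty := fun Q hQ => by
      obtain ⟨x, hx, hMx⟩ := hnot Q hQ
      exact ⟨x, mem_inter.2 ⟨mem_filter.2 ⟨mem_univ _, by omega⟩, hx⟩⟩
    have := P.card_parts_le_card_inter hmeet
    rw [hPk] at this
    exact absurd (mem_filter.1 hw).2 (by omega)
  have hkq : (#X : ℝ) - k ≤ k * (#X / k : ℕ) := by
    have := Nat.lt_mul_div_succ #X hk
    have : (#X : ℝ) < k * ((#X / k : ℕ) + 1) := by exact_mod_cast this
    linarith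
  calc (#{w | #(neighbors M w ∩ X) < k} : ℝ) * (#X - k)
      ≤ #{w | #(neighbors M w ∩ X) < k} * (k * (#X / k : ℕ)) := by gcongr
    _ ≤ (∑ Q ∈ P.parts, (#(B Q) : ℝ)) * (k * (#X / k : ℕ)) := by
        gcongr
        exact_mod_cast (card_le_card hcover).trans card_biUnion_le
    _ = k * ∑ Q ∈ P.parts, (#(B Q) : ℝ) * (#X / k : ℕ) := by
        rw [sum_mul, mul_sum]
        exact sum_congr rfl fun _ _ => by ring
    _ ≤ k * ∑ _Q ∈ P.parts, (γ * m) ^ 2 := by gcongr with Q hQ; exact hB Q hQ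
    _ = k ^ 2 * (γ * m) ^ 2 := by rw [sum_const, hPk, nsmul_eq_mul]; ring

theorem card_filter_card_inter_lt_five_mul_le (h : IsSpectralExpander M m d γ)
    (hγm : 1 ≤ γ ^ 2 * m) {X : Finset V} (hX : 2 ^ 100 * γ ^ 2 * m ≤ #X) :
    (#{w | #(neighbors M w ∩ X) < 5} : ℝ) * 2 ^ 94 ≤ m := by
  have hXm : (#X : ℝ) ≤ m := by exact_mod_cast h.1 ▸ card_le_univ X
  have hd : 0 < d := h.degree_pos (by exact_mod_cast (by nlinarith : (1 : ℝ) < m))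
  have hbad := h.card_filter_card_inter_lt_mul_le hd X 5
  set β : ℝ := ((#{w | #(neighbors M w ∩ X) < 5} : ℕ) : ℝ)
  have hγm' : 0 < γ ^ 2 * m := by linarith
  have h99 : (β * 2 ^ 99) * (γ ^ 2 * m) ≤ (25 * m) * (γ ^ 2 * m) := by
    calc (β * 2 ^ 99) * (γ ^ 2 * m) ≤ β * (#X - (5 : ℕ)) := by
          rw [mul_assoc]
          gcongr
          push_cast
          linarith
      _ ≤ (5 : ℕ) ^ 2 * (γ * m) ^ 2 := hbad
      _ = (25 * m) * (γ ^ 2 * m) := by push_cast; ring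
  linarith [le_of_mul_le_mul_right h99 hγm']

end IsSpectralExpander

section Pushforward

variable {ι κ : Type*} [DecidableEq κ]

noncomputable def pushforward (s : Finset ι) (p : ι → ℝ) (φ : ι → κ) (y : κ) : ℝ :=
  ∑ i ∈ s with φ i = y, p i

theorem exists_mem_eq_of_pushforward_ne_zero {s : Finset ι} {p : ι → ℝ} {φ : ι → κ} {y : κ}
    (h : pushforward s p φ y ≠ 0) : ∃ i ∈ s, φ i = y := by
  obtain ⟨i, hi, -⟩ := exists_ne_zero_of_sum_ne_zero h
  exact ⟨i, mem_filter.1 hi⟩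

variable {α β : Type*} [Fintype α] [Fintype β] [DecidableEq α] [DecidableEq β]

theorem isDistribution_pushforward {s : Finset ι} {p : ι → ℝ} (hp : ∀ i ∈ s, 0 ≤ p i)
    (hp₁ : ∑ i ∈ s, p i = 1) (φ : ι → Finset α × Finset β) :
    IsDistribution (pushforward s p φ) :=
  ⟨fun _ => sum_nonneg fun i hi => hp i (mem_filter.1 hi).1, (sum_fiberwise s φ p).trans hp₁⟩

theorem hitProb_pushforward (s : Finset ι) (p : ι → ℝ) (φ : ι → Finset α × Finset β)
    (X : Finset α) (Y : Finset β) :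
    hitProb (pushforward s p φ) X Y =
      ∑ i ∈ s with ((φ i).1 ∩ X).Nonempty ∧ ((φ i).2 ∩ Y).Nonempty, p i := by
  rw [hitProb, ← sum_fiberwise_of_maps_to (g := φ)
    (t := univ.filter fun R : Finset α × Finset β => (R.1 ∩ X).Nonempty ∧ (R.2 ∩ Y).Nonempty)
    fun i hi => by simpa using (mem_filter.1 hi).2]
  refine sum_congr rfl fun R hR => ?_
  rw [pushforward, filter_filter]
  exact sum_congr (filter_congr fun i _ => ⟨fun h => ⟨h ▸ (mem_filter.1 hR).2, h⟩, And.right⟩)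
    fun _ _ => rfl

end Pushforward

section NeighborhoodSplit

variable {V : Type*} [Fintype V] [DecidableEq V]

noncomputable def neighborhoodSplit (M : Matrix V V ℕ) (W : Finset V) :
    Finset V × Finset V → ℝ :=
  pushforward (W.sigma fun w => (neighbors M w).powerset)
    (fun x => ((#W : ℝ) * 2 ^ #(neighbors M x.1))⁻¹) (fun x => (x.2, neighbors M x.1 \ x.2))

theorem isDistribution_neighborhoodSplit (M : Matrix V V ℕ) {W : Finset V} (hW : W.Nonempty) :
    IsDistribution (neighborhoodSplit M W) := by
  refine isDistribution_pushforward (fun _ _ => by positivity) ?_ _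
  rw [sum_sigma]
  have hW' : (#W : ℝ) ≠ 0 := by exact_mod_cast hW.card_pos.ne'
  simp only [sum_const, card_powerset, nsmul_eq_mul]
  have hterm : ∀ w, ((2 ^ #(neighbors M w) : ℕ) : ℝ) * ((#W : ℝ) * 2 ^ #(neighbors M w))⁻¹ =
      (#W : ℝ)⁻¹ := fun w => by push_cast; field_simp
  rw [sum_congr rfl fun w _ => hterm w, sum_const, nsmul_eq_mul, mul_inv_cancel₀ hW']

theorem monoRectangle_of_neighborhoodSplit_ne_zero {M : Matrix V V ℕ} {c : V → Bool} {b : Bool}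
    {W : Finset V} (hW : ∀ w ∈ W, c w = b) {R : Finset V × Finset V}
    (hR : neighborhoodSplit M W R ≠ 0) : MonoRectangle M c b R := by
  obtain ⟨⟨w, A⟩, hwA, rfl⟩ := exists_mem_eq_of_pushforward_ne_zero hR
  rw [mem_sigma, mem_powerset] at hwA
  intro u hu v hv
  rw [mem_sdiff] at hv
  refine ⟨fun huv => hv.2 (huv ▸ hu), w, ?_, hW w hwA.1⟩
  have hu' := hwA.2 hu
  simp only [neighbors, mem_filter, mem_univ, true_and] at hu' hv
  simp only [commonNeighbors, mem_filter, mem_univ, true_and]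
  exact ⟨hu', hv.1⟩

theorem one_sub_sub_le_hitProb_neighborhoodSplit (M : Matrix V V ℕ) {W : Finset V}
    (hW : W.Nonempty) (k : ℕ) (X Y : Finset V) :
    1 - 2 / 2 ^ k - ((#{w | #(neighbors M w ∩ X) < k} + #{w | #(neighbors M w ∩ Y) < k} : ℕ)
      : ℝ) / #W ≤ hitProb (neighborhoodSplit M W) X Y := by
  have hW' : (0 : ℝ) < #W := by exact_mod_cast hW.card_pos
  rw [neighborhoodSplit, hitProb_pushforward, sum_filter, sum_sigma]
  set N := neighbors M
  have hvertex : ∀ w, (∑ A ∈ (N w).powerset,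
      if (A ∩ X).Nonempty ∧ ((N w \ A) ∩ Y).Nonempty then ((#W : ℝ) * 2 ^ #(N w))⁻¹ else 0) =
      (#W : ℝ)⁻¹ *
        (#{A ∈ (N w).powerset | (A ∩ X).Nonempty ∧ ((N w \ A) ∩ Y).Nonempty} / 2 ^ #(N w)) :=
    fun w => by rw [← sum_filter, sum_const, nsmul_eq_mul, mul_inv]; ring
  have hbad : ∀ Z : Finset V, (#{w ∈ W | #(N w ∩ Z) < k} : ℝ) ≤ #{w | #(N w ∩ Z) < k} :=
    fun Z => by exact_mod_cast card_le_card (filter_subset_filter _ (subset_univ W))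
  simp only [hvertex]
  calc _ ≤ 1 - 2 / 2 ^ k - ((#{w ∈ W | #(N w ∩ X) < k} : ℝ) + #{w ∈ W | #(N w ∩ Y) < k}) / #W := by
        push_cast
        exact sub_le_sub_left (div_le_div_of_nonneg_right (add_le_add (hbad X) (hbad Y)) hW'.le) _
    _ = ∑ w ∈ W, (#W : ℝ)⁻¹ * (1 - 2 / 2 ^ k - (if #(N w ∩ X) < k then 1 else 0)
          - (if #(N w ∩ Y) < k then 1 else 0)) := by
        rw [← mul_sum, sum_sub_distrib, sum_sub_distrib, sum_const, sum_boole, sum_boole,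
          nsmul_eq_mul]
        field_simp
        ring
    _ ≤ _ := sum_le_sum fun w _ =>
        mul_le_mul_of_nonneg_left (one_sub_le_card_filter_div _ _ _ k) (by positivity)

end NeighborhoodSplit

theorem BalancedColoring.card_le_three_mul_card_filter {V : Type*} [Fintype V] {c : V → Bool}
    (hc : BalancedColoring c) (b : Bool) : Fintype.card V ≤ 3 * #{v | c v = b} := by
  cases b
  · have := card_filter_add_card_filter_not (s := univ) (fun v => c v = true)
    simp only [Bool.not_eq_true, card_univ] at this
    have := hc.2
    omega
  · exact hc.1

theorem two_zpow_mul_sq_le_zpow_neg_floor {γ : ℝ} (hγ : 0 < γ) (c : ℤ) :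
    (2 : ℝ) ^ c * γ ^ 2 ≤ 2 ^ (-(⌊2 * Real.logb 2 (1 / γ)⌋ - c)) := by
  have h : (2 : ℝ) ^ ((⌊2 * Real.logb 2 (1 / γ)⌋ : ℤ) : ℝ) ≤ (1 / γ) ^ 2 := by
    rw [← Real.le_logb_iff_rpow_le one_lt_two (by positivity), Real.logb_pow]
    push_cast
    exact Int.floor_le _
  rw [Real.rpow_intCast, one_div, inv_pow, le_inv_comm₀ (by positivity) (by positivity),
    ← _root_.zpow_neg] at h
  rw [neg_sub, zpow_sub₀ two_ne_zero, div_eq_mul_inv, ← _root_.zpow_neg]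
  gcongr
  simpa only [one_div] using h

theorem expander_gadget_hitting_distribution_general {V : Type*} [Fintype V] [DecidableEq V]
    (M : Matrix V V ℕ) (m d : ℕ) (γ : ℝ) (hγ : 0 < γ)
    (hexp : IsSpectralExpander M m d γ)
    (c : V → Bool) (hbal : BalancedColoring c)
    (hm : 1 / γ ^ 2 ≤ (m : ℝ)) :
    ∀ b : Bool, ∃ μ : Finset V × Finset V → ℝ,
      IsDistribution μ ∧
      (∀ R, μ R ≠ 0 → MonoRectangle M c b R) ∧
      IsHitting μ (1 / 10) (⌊2 * Real.logb 2 (1 / γ)⌋ - 100) := by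
  intro b
  set W : Finset V := {v | c v = b}
  have hγm : 1 ≤ γ ^ 2 * m := by rwa [div_le_iff₀ (by positivity), mul_comm] at hm
  have hmW : (m : ℝ) ≤ 3 * #W := by exact_mod_cast hexp.1 ▸ hbal.card_le_three_mul_card_filter b
  have hW : (0 : ℝ) < #W := by nlinarith
  have hWne : W.Nonempty := card_pos.1 (by exact_mod_cast hW)
  refine ⟨neighborhoodSplit M W, isDistribution_neighborhoodSplit M hWne,
    fun R => monoRectangle_of_neighborhoodSplit_ne_zero fun w hw => (mem_filter.1 hw).2,
    fun X Y hX hY => ?_⟩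
  have hfew : ∀ Z : Finset V,
      (2 : ℝ) ^ (-(⌊2 * Real.logb 2 (1 / γ)⌋ - 100)) * Fintype.card V ≤ #Z →
      (#{w | #(neighbors M w ∩ Z) < 5} : ℝ) * 2 ^ 94 ≤ m := fun Z hZ =>
    hexp.card_filter_card_inter_lt_five_mul_le hγm <| le_trans (by
      rw [hexp.1]
      gcongr
      exact_mod_cast two_zpow_mul_sq_le_zpow_neg_floor hγ 100) hZ
  have hbad : ((#{w | #(neighbors M w ∩ X) < 5} + #{w | #(neighbors M w ∩ Y) < 5} : ℕ) : ℝ) / #W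
      ≤ 1 / 40 := by
    rw [div_le_iff₀ hW]
    push_cast
    linarith [hfew X hX, hfew Y hY]
  refine le_trans ?_ (one_sub_sub_le_hitProb_neighborhoodSplit M hWne 5 X Y)
  norm_num at hbad ⊢
  linarith

/-- Let `G` be an `(m,d,γ)`-spectral expander on a finite vertex set `V`
with `|V| = m`, in which any two distinct vertices `u, v` satisfy `|Γ(u) ∩ Γ(v)| ≤ 1`,
let `c : V → {0,1}` be a balanced coloring of `G`, and assume `m ≥ 1/γ²`. Then for every
`b ∈ {0,1}` there exists a `(1/10, ⌊2·log₂(1/γ)⌋ − 100)`-hitting distribution over the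
`b`-monochromatic rectangles of the partial function `g(G,c)`. -/
theorem expander_gadget_hitting_distribution {V : Type*} [Fintype V] [DecidableEq V]
    (M : Matrix V V ℕ) (m d : ℕ) (γ : ℝ) (hγ : 0 < γ)
    (hexp : IsSpectralExpander M m d γ)
    (hone : ∀ u v : V, u ≠ v → (commonNeighbors M u v).card ≤ 1)
    (c : V → Bool) (hbal : BalancedColoring c)
    (hm : 1 / γ ^ 2 ≤ (m : ℝ)) :
    ∀ b : Bool, ∃ μ : Finset V × Finset V → ℝ,
      IsDistribution μ ∧
      (∀ R, μ R ≠ 0 → MonoRectangle M c b R) ∧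
      IsHitting μ (1 / 10) (⌊2 * Real.logb 2 (1 / γ)⌋ - 100) :=
  expander_gadget_hitting_distribution_general M m d γ hγ hexp c hbal hm
end

section
/- Let G be an (m,d,γ)-spectral expander such that 2d + 4 > d²·(2γ² + 4(1 − γ²)/m). Then any two distinct vertices u, v of G satisfy |Γ(u) ∩ Γ(v)| ≤ 1. -/
/-! Test the adjacency matrix `A` on `x = e_u + e_v`. Since `(A x) w = M w u + M w v`,
`‖A x‖² = ∑_w (M w u + M w v)² ≥ 2d + 2·|Γ(u) ∩ Γ(v)|`. Spectrally, the all-ones vector spans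
the (simple) `d`-eigenspace, so the component of `x` along it has squared length
`⟨1, x⟩² / m = 4 / m`, while the remaining `2 - 4 / m` is stretched by at most `γ d`; hence
`‖A x‖² ≤ d² · 4 / m + γ² d² (2 - 4 / m)`, which the hypothesis puts below `2d + 4`. -/

open Finset Matrix

namespace Matrix.IsHermitian

variable {V : Type*} [Fintype V] [DecidableEq V] {A : Matrix V V ℝ} (hA : A.IsHermitian)
include hA

theorem sum_eigenvectorBasis_dotProduct_mul (p q : V → ℝ) :
    ∑ i, (⇑(hA.eigenvectorBasis i) ⬝ᵥ p) * (⇑(hA.eigenvectorBasis i) ⬝ᵥ q) = p ⬝ᵥ q := by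
  have h := hA.eigenvectorBasis.sum_inner_mul_inner (WithLp.toLp 2 p) (WithLp.toLp 2 q)
  simp only [PiLp.inner_apply, RCLike.inner_apply, conj_trivial] at h
  simpa [dotProduct, mul_comm] using h

theorem eigenvectorBasis_dotProduct_mulVec (i : V) (x : V → ℝ) :
    ⇑(hA.eigenvectorBasis i) ⬝ᵥ (A *ᵥ x) =
      hA.eigenvalues i * (⇑(hA.eigenvectorBasis i) ⬝ᵥ x) := by
  rw [dotProduct_mulVec, ← mulVec_transpose, ← conjTranspose_eq_transpose_of_trivial, hA.eq,
    hA.mulVec_eigenvectorBasis, smul_dotProduct, smul_eq_mul]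

theorem eigenvectorBasis_dotProduct_eq_zero {μ : ℝ} {w : V → ℝ} (hw : A *ᵥ w = μ • w) {i : V}
    (hi : hA.eigenvalues i ≠ μ) : ⇑(hA.eigenvectorBasis i) ⬝ᵥ w = 0 := by
  have h := hA.eigenvectorBasis_dotProduct_mulVec i w
  rw [hw, dotProduct_smul, smul_eq_mul] at h
  by_contra h0
  exact hi (mul_right_cancel₀ h0 h.symm)

theorem sq_eigenvectorBasis_dotProduct_mul_dotProduct_self {μ : ℝ} {w : V → ℝ}
    (hw : A *ᵥ w = μ • w) {i₀ : V} (hsimple : ∀ i, hA.eigenvalues i = μ → i = i₀) (x : V → ℝ) :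
    (⇑(hA.eigenvectorBasis i₀) ⬝ᵥ x) ^ 2 * (w ⬝ᵥ w) = (w ⬝ᵥ x) ^ 2 := by
  -- Parseval: `w` is orthogonal to every eigenvector other than the `i₀`-th.
  have hw_coord (q : V → ℝ) :
      (⇑(hA.eigenvectorBasis i₀) ⬝ᵥ w) * (⇑(hA.eigenvectorBasis i₀) ⬝ᵥ q) = w ⬝ᵥ q := by
    refine (sum_eq_single_of_mem i₀ (mem_univ _) fun i _ hi => ?_).symm.trans
      (hA.sum_eigenvectorBasis_dotProduct_mul w q)
    rw [hA.eigenvectorBasis_dotProduct_eq_zero hw (hi ∘ hsimple i), zero_mul]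
  rw [← hw_coord w, ← hw_coord x]
  ring

theorem dotProduct_mulVec_self_le {i₀ : V} {b : ℝ} (hb : ∀ i ≠ i₀, |hA.eigenvalues i| ≤ b)
    (x : V → ℝ) :
    (A *ᵥ x) ⬝ᵥ (A *ᵥ x) ≤ hA.eigenvalues i₀ ^ 2 * (⇑(hA.eigenvectorBasis i₀) ⬝ᵥ x) ^ 2 +
      b ^ 2 * (x ⬝ᵥ x - (⇑(hA.eigenvectorBasis i₀) ⬝ᵥ x) ^ 2) := by
  set c : V → ℝ := fun i => ⇑(hA.eigenvectorBasis i) ⬝ᵥ x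
  have hAx : (A *ᵥ x) ⬝ᵥ (A *ᵥ x) = ∑ i, hA.eigenvalues i ^ 2 * c i ^ 2 := by
    rw [← hA.sum_eigenvectorBasis_dotProduct_mul]
    simp only [hA.eigenvectorBasis_dotProduct_mulVec, c]
    ring_nf
  have hx : x ⬝ᵥ x = ∑ i, c i ^ 2 := by
    rw [← hA.sum_eigenvectorBasis_dotProduct_mul]
    simp only [c, sq]
  have htail : ∑ i ∈ univ.erase i₀, hA.eigenvalues i ^ 2 * c i ^ 2 ≤
      b ^ 2 * ∑ i ∈ univ.erase i₀, c i ^ 2 := by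
    rw [mul_sum]
    refine sum_le_sum fun i hi => mul_le_mul_of_nonneg_right ?_ (sq_nonneg _)
    obtain ⟨hlo, hhi⟩ := abs_le.mp (hb i (ne_of_mem_erase hi))
    exact sq_le_sq' hlo hhi
  rw [hAx, hx, ← add_sum_erase _ _ (mem_univ i₀), ← add_sum_erase _ _ (mem_univ i₀)]
  linarith

end Matrix.IsHermitian

theorem card_commonNeighbors_le_sum_mul {V : Type*} [Fintype V] [DecidableEq V]
    (M : Matrix V V ℕ) (u v : V) : #(commonNeighbors M u v) ≤ ∑ w, M w u * M w v :=
  calc #(commonNeighbors M u v) = ∑ w ∈ commonNeighbors M u v, 1 := card_eq_sum_ones _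
    _ ≤ ∑ w ∈ commonNeighbors M u v, M w u * M w v := sum_le_sum fun w hw => by
        simp only [commonNeighbors, mem_filter] at hw
        exact Nat.one_le_iff_ne_zero.mpr (mul_ne_zero_iff.mpr ⟨by omega, by omega⟩)
    _ ≤ ∑ w, M w u * M w v := sum_le_sum_of_subset (filter_subset _ _)

theorem sum_add_sum_add_two_mul_card_commonNeighbors_le {V : Type*} [Fintype V] [DecidableEq V]
    (M : Matrix V V ℕ) (u v : V) :
    ∑ w, M w u + ∑ w, M w v + 2 * #(commonNeighbors M u v) ≤ ∑ w, (M w u + M w v) ^ 2 := by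
  have hpoint (a b : ℕ) : a + b + 2 * (a * b) ≤ (a + b) ^ 2 := by
    nlinarith [Nat.le_self_pow two_ne_zero a, Nat.le_self_pow two_ne_zero b]
  calc ∑ w, M w u + ∑ w, M w v + 2 * #(commonNeighbors M u v)
      ≤ ∑ w, M w u + ∑ w, M w v + 2 * ∑ w, M w u * M w v := by
        gcongr; exact card_commonNeighbors_le_sum_mul M u v
    _ = ∑ w, (M w u + M w v + 2 * (M w u * M w v)) := by
        rw [sum_add_distrib, sum_add_distrib, mul_sum]
    _ ≤ ∑ w, (M w u + M w v) ^ 2 := sum_le_sum fun w _ => hpoint _ _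

namespace IsSpectralExpander

variable {V : Type*} [Fintype V] [DecidableEq V] {M : Matrix V V ℕ} {m d : ℕ} {γ : ℝ}

theorem apply_comm (hG : IsSpectralExpander M m d γ) (a b : V) : M a b = M b a := by
  obtain ⟨-, -, hH, -⟩ := hG
  have h := congrFun (congrFun hH b) a
  simp only [conjTranspose_apply, map_apply, star_trivial] at h
  exact_mod_cast h

theorem sum_col (hG : IsSpectralExpander M m d γ) (v : V) : ∑ w, M w v = d := by
  simp_rw [hG.apply_comm _ v]
  exact hG.2.1 v

theorem mulVec_one (hG : IsSpectralExpander M m d γ) :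
    M.map (Nat.cast : ℕ → ℝ) *ᵥ 1 = (d : ℝ) • 1 := by
  ext w
  simp [mulVec, dotProduct, ← Nat.cast_sum, hG.2.1 w]

theorem one_dotProduct_one (hG : IsSpectralExpander M m d γ) : (1 : V → ℝ) ⬝ᵥ 1 = m := by
  simp [dotProduct, hG.1]

theorem dotProduct_mulVec_self_le (hG : IsSpectralExpander M m d γ) (x : V → ℝ) :
    (M.map (Nat.cast : ℕ → ℝ) *ᵥ x) ⬝ᵥ (M.map (Nat.cast : ℕ → ℝ) *ᵥ x) ≤
      d ^ 2 * ((1 ⬝ᵥ x) ^ 2 / m) + (γ * d) ^ 2 * (x ⬝ᵥ x - (1 ⬝ᵥ x) ^ 2 / m) := by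
  have hone := hG.mulVec_one
  have hone_one := hG.one_dotProduct_one
  obtain ⟨hcard, -, hH, ⟨i₀, hi₀, hsimple⟩, hbd⟩ := hG
  have hm : (m : ℝ) ≠ 0 := by rw [← hcard]; exact_mod_cast (Fintype.card_pos_iff.mpr ⟨i₀⟩).ne'
  have hproj := hH.sq_eigenvectorBasis_dotProduct_mul_dotProduct_self hone hsimple x
  rw [hone_one, ← eq_div_iff hm] at hproj
  have h := hH.dotProduct_mulVec_self_le (fun i hi => hbd i (hi ∘ hsimple i)) x
  rwa [hi₀, hproj] at h

end IsSpectralExpander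

theorem map_natCast_mulVec_single_add_single_dotProduct_self {V : Type*} [Fintype V]
    [DecidableEq V] (M : Matrix V V ℕ) (u v : V) :
    (M.map (Nat.cast : ℕ → ℝ) *ᵥ (Pi.single u 1 + Pi.single v 1)) ⬝ᵥ
        (M.map (Nat.cast : ℕ → ℝ) *ᵥ (Pi.single u 1 + Pi.single v 1)) =
      ((∑ w, (M w u + M w v) ^ 2 : ℕ) : ℝ) := by
  simp [mulVec_add, dotProduct, sq]

/-- Let `G` be an `(m,d,γ)`-spectral expander such that
`2d + 4 > d²·(2γ² + 4(1 − γ²)/m)`. Then any two distinct vertices `u, v` of `G`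
satisfy `|Γ(u) ∩ Γ(v)| ≤ 1`. -/
theorem expander_common_neighbors_le_one {V : Type*} [Fintype V] [DecidableEq V]
    (M : Matrix V V ℕ) (m d : ℕ) (γ : ℝ)
    (hexp : IsSpectralExpander M m d γ)
    (hineq : (d : ℝ) ^ 2 * (2 * γ ^ 2 + 4 * (1 - γ ^ 2) / (m : ℝ)) < 2 * d + 4) :
    ∀ u v : V, u ≠ v → (commonNeighbors M u v).card ≤ 1 := by
  intro u v huv
  set x : V → ℝ := Pi.single u 1 + Pi.single v 1
  have hx_self : x ⬝ᵥ x = 2 := by norm_num [x, dotProduct_add, huv, huv.symm]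
  have hone_x : 1 ⬝ᵥ x = 2 := by norm_num [x, dotProduct_add]
  have hlower : (2 * d + 2 * #(commonNeighbors M u v) : ℝ) ≤
      (M.map (Nat.cast : ℕ → ℝ) *ᵥ x) ⬝ᵥ (M.map (Nat.cast : ℕ → ℝ) *ᵥ x) := by
    have h := sum_add_sum_add_two_mul_card_commonNeighbors_le M u v
    rw [hexp.sum_col u, hexp.sum_col v] at h
    rw [map_natCast_mulVec_single_add_single_dotProduct_self]
    exact_mod_cast (by omega : 2 * d + 2 * #(commonNeighbors M u v) ≤ _)
  have hupper := hexp.dotProduct_mulVec_self_le x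
  rw [hx_self, hone_x] at hupper
  have hcard : (#(commonNeighbors M u v) : ℝ) < 2 := by
    have : (d : ℝ) ^ 2 * (2 ^ 2 / m) + (γ * d) ^ 2 * (2 - 2 ^ 2 / m) =
        d ^ 2 * (2 * γ ^ 2 + 4 * (1 - γ ^ 2) / m) := by ring
    linarith
  have : #(commonNeighbors M u v) < 2 := by exact_mod_cast hcard
  omega
end

section
/- For every function g : {0,1}^k × {0,1}^k → {0,1} and every integer h ≥ 1 there exists b ∈ {0,1} such that the following holds: for every probability distribution μ over b-monochromatic rectangles of g there exist subsets X, Y ⊆ {0,1}^k, each of size at least 2^{k−h}, such that Pr_{R∼μ}[R ∩ (X × Y) ≠ ∅] ≤ 2^{k−2h+1}. -/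
open Finset

/-!
If some colour `b'` admits a monochromatic rectangle `A × B` with `|A|, |B| ≥ 2^(k-h)`, take
`b = !b'`: no `b`-monochromatic rectangle meets `A × B`. Otherwise every `b`-monochromatic
rectangle has a side with fewer than `2^(k-h)` points. Split `{0,1}^k` into `2^h` blocks of size
`2^(k-h)`; such a rectangle then meets at most `2^(k-h) · 2^h` of the `2^(2h)` products of two
blocks, so averaging over these products one of them is hit with probability at most `2^(k-2h)`.
-/

def IsMonochromatic {α β : Type*} (g : α → β → Bool) (b : Bool) (A : Finset α) (B : Finset β) :
    Prop :=
  ∀ x ∈ A, ∀ y ∈ B, g x y = b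

lemma isMonochromatic_singleton {α β : Type*} (g : α → β → Bool) (x : α) (y : β) :
    IsMonochromatic g (g x y) {x} {y} := by
  simp [IsMonochromatic]

lemma card_image_mul_card_image_le {α V : Type*} [Fintype V] [DecidableEq V] (π : α → V)
    {S T : Finset α} {m : ℕ} (hST : #S < m ∨ #T < m) :
    #(S.image π) * #(T.image π) ≤ m * Fintype.card V := by
  rcases hST with hS | hT
  · exact Nat.mul_le_mul (card_image_le.trans hS.le) (card_le_univ _)
  · rw [mul_comm m]
    exact Nat.mul_le_mul (card_le_univ _) (card_image_le.trans hT.le)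

section

variable {α β : Type*} [Fintype α] [Fintype β] [DecidableEq α] [DecidableEq β]

lemma hitProb_eq_zero_of_isMonochromatic_not {g : α → β → Bool} {b : Bool}
    {μ : Finset α × Finset β → ℝ} (hμ : ∀ R, μ R ≠ 0 → IsMonochromatic g b R.1 R.2)
    {A : Finset α} {B : Finset β} (hAB : IsMonochromatic g (!b) A B) :
    hitProb μ A B = 0 := by
  refine sum_eq_zero fun R hR => ?_
  obtain ⟨⟨x, hx⟩, ⟨y, hy⟩⟩ := (mem_filter.mp hR).2
  rw [mem_inter] at hx hy
  by_contra hR0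
  have hb := (hμ R hR0 x hx.1 y hy.1).symm.trans (hAB x hx.2 y hy.2)
  cases b <;> simp at hb

lemma sum_hitProb_fibers {V W : Type*} [Fintype V] [Fintype W] [DecidableEq V] [DecidableEq W]
    (μ : Finset α × Finset β → ℝ) (π : α → V) (σ : β → W) :
    ∑ p : V × W, hitProb μ {x | π x = p.1} {y | σ y = p.2}
      = ∑ R, (#(R.1.image π) * #(R.2.image σ) : ℝ) * μ R := by
  simp only [hitProb, sum_filter]
  rw [sum_comm]
  refine sum_congr rfl fun R _ => ?_
  rw [← sum_filter, sum_const, nsmul_eq_mul, ← Nat.cast_mul, ← card_product]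
  congr 3
  ext p
  simp only [mem_filter, mem_univ, true_and, mem_product, inter_filter, inter_univ,
    fiber_nonempty_iff_mem_image]

lemma exists_hitProb_fibers_le {V W : Type*} [Fintype V] [Fintype W] [Nonempty V] [Nonempty W]
    [DecidableEq V] [DecidableEq W] {μ : Finset α × Finset β → ℝ} (hμ : IsDistribution μ)
    (π : α → V) (σ : β → W) {N : ℕ}
    (hN : ∀ R, μ R ≠ 0 → #(R.1.image π) * #(R.2.image σ) ≤ N) :
    ∃ v w, hitProb μ {x | π x = v} {y | σ y = w} ≤ N / (Fintype.card V * Fintype.card W) := by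
  have hsum : ∑ p : V × W, hitProb μ {x | π x = p.1} {y | σ y = p.2} ≤ N := by
    rw [sum_hitProb_fibers]
    calc ∑ R, (#(R.1.image π) * #(R.2.image σ) : ℝ) * μ R ≤ ∑ R, (N : ℝ) * μ R := by
          refine sum_le_sum fun R _ => ?_
          rcases eq_or_ne (μ R) 0 with hR | hR
          · simp [hR]
          · exact mul_le_mul_of_nonneg_right (by exact_mod_cast hN R hR) (hμ.1 R)
      _ = N := by rw [← mul_sum, hμ.2, mul_one]
  obtain ⟨⟨v, w⟩, -, hvw⟩ := exists_le_of_sum_le (s := univ)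
    (f := fun p : V × W => hitProb μ {x | π x = p.1} {y | σ y = p.2})
    (g := fun _ => (N : ℝ) / (Fintype.card V * Fintype.card W)) univ_nonempty (by
      rw [sum_const, card_univ, Fintype.card_prod, nsmul_eq_mul, Nat.cast_mul,
        mul_div_cancel₀ _ (by positivity)]
      exact hsum)
  exact ⟨v, w, hvw⟩

lemma exists_hitProb_fibers_le_of_card_lt {V : Type*} [Fintype V] [Nonempty V] [DecidableEq V]
    {μ : Finset α × Finset α → ℝ} (hμ : IsDistribution μ) (π : α → V) {m : ℕ}
    (hm : ∀ R, μ R ≠ 0 → #R.1 < m ∨ #R.2 < m) :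
    ∃ v w, hitProb μ {x | π x = v} {y | π y = w} ≤ m / Fintype.card V := by
  obtain ⟨v, w, hvw⟩ := exists_hitProb_fibers_le hμ π π (N := m * Fintype.card V)
    fun R hR => card_image_mul_card_image_le π (hm R hR)
  refine ⟨v, w, hvw.trans_eq ?_⟩
  push_cast
  rw [mul_div_mul_right _ _ (by positivity)]

end

lemma exists_fiber_card_eq {α V : Type*} [Fintype α] [Fintype V] [DecidableEq V] {n : ℕ}
    (hcard : Fintype.card α = Fintype.card V * n) :
    ∃ π : α → V, ∀ v, #{x | π x = v} = n := by
  obtain ⟨e⟩ : Nonempty (α ≃ V × Fin n) := ⟨Fintype.equivOfCardEq (by simpa using hcard)⟩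
  refine ⟨fun x => (e x).1, fun v => ?_⟩
  rw [card_equiv e (t := {v} ×ˢ univ) (by simp only [mem_filter, mem_univ, true_and,
    mem_product, mem_singleton, and_true, implies_true]), card_product, card_singleton, one_mul,
    card_univ, Fintype.card_fin]

lemma two_zpow_sub_le_two_pow_sub (k h : ℕ) :
    (2 : ℝ) ^ ((k : ℤ) - h) ≤ ((2 ^ (k - h) : ℕ) : ℝ) := by
  calc (2 : ℝ) ^ ((k : ℤ) - h) ≤ 2 ^ (((k - h : ℕ) : ℤ)) :=
        zpow_le_zpow_right₀ one_le_two (by omega)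
    _ = ((2 ^ (k - h) : ℕ) : ℝ) := by push_cast [zpow_natCast]; ring

lemma two_pow_sub_div_two_pow_le {k h : ℕ} (hhk : h ≤ k) :
    ((2 ^ (k - h) : ℕ) : ℝ) / (2 ^ h : ℕ) ≤ (2 : ℝ) ^ ((k : ℤ) - 2 * h + 1) := by
  calc ((2 ^ (k - h) : ℕ) : ℝ) / (2 ^ h : ℕ) = (2 : ℝ) ^ ((k : ℤ) - 2 * h) := by
        obtain ⟨d, rfl⟩ := Nat.exists_eq_add_of_le hhk
        rw [show ((h + d : ℕ) : ℤ) - 2 * h = d - h by push_cast; ring, zpow_sub₀ two_ne_zero,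
          Nat.add_sub_cancel_left]
        norm_cast
    _ ≤ (2 : ℝ) ^ ((k : ℤ) - 2 * h + 1) := zpow_le_zpow_right₀ one_le_two (by omega)

theorem hitting_distributions_lower_bound_general (k : ℕ)
    (g : (Fin k → Bool) → (Fin k → Bool) → Bool) (h : ℕ) :
    ∃ b : Bool, ∀ μ : Finset (Fin k → Bool) × Finset (Fin k → Bool) → ℝ,
      IsDistribution μ →
      (∀ R, μ R ≠ 0 → ∀ x ∈ R.1, ∀ y ∈ R.2, g x y = b) →
      ∃ X Y : Finset (Fin k → Bool),
        (2 : ℝ) ^ ((k : ℤ) - h) ≤ X.card ∧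
        (2 : ℝ) ^ ((k : ℤ) - h) ≤ Y.card ∧
        hitProb μ X Y ≤ (2 : ℝ) ^ ((k : ℤ) - 2 * h + 1) := by
  classical
  have hbound := two_zpow_sub_le_two_pow_sub k h
  by_cases hbig : ∃ b A B, 2 ^ (k - h) ≤ #A ∧ 2 ^ (k - h) ≤ #B ∧ IsMonochromatic g b A B
  · obtain ⟨b, A, B, hA, hB, hAB⟩ := hbig
    refine ⟨!b, fun μ _ hμ => ⟨A, B, hbound.trans (by exact_mod_cast hA),
      hbound.trans (by exact_mod_cast hB), ?_⟩⟩
    rw [hitProb_eq_zero_of_isMonochromatic_not hμ (by rwa [Bool.not_not])]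
    positivity
  have hsmall : ∀ b A B, IsMonochromatic g b A B → #A < 2 ^ (k - h) ∨ #B < 2 ^ (k - h) := by
    intro b A B hAB
    by_contra! hlarge
    exact hbig ⟨b, A, B, hlarge.1, hlarge.2, hAB⟩
  have hhk : h ≤ k := by
    by_contra! hkh
    simpa [Nat.sub_eq_zero_of_le hkh.le] using
      hsmall _ _ _ (isMonochromatic_singleton g default default)
  obtain ⟨π, hπ⟩ := exists_fiber_card_eq (α := Fin k → Bool) (V := Fin h → Bool)
    (n := 2 ^ (k - h)) (by simp [← pow_add, Nat.add_sub_cancel' hhk])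
  refine ⟨false, fun μ hdist hμ => ?_⟩
  obtain ⟨v, w, hvw⟩ := exists_hitProb_fibers_le_of_card_lt hdist π
    fun R hR => hsmall _ _ _ (hμ R hR)
  refine ⟨_, _, by rwa [hπ], by rwa [hπ], hvw.trans ?_⟩
  simpa using two_pow_sub_div_two_pow_le hhk

/-- For every `g : {0,1}^k × {0,1}^k → {0,1}` and every integer `h ≥ 1`
there is `b ∈ {0,1}` such that: for every probability distribution `μ` over
`b`-monochromatic rectangles of `g` there are `X, Y ⊆ {0,1}^k`, each of size at least
`2^(k−h)`, with `Pr_{R∼μ}[R ∩ (X × Y) ≠ ∅] ≤ 2^(k−2h+1)`. -/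
theorem hitting_distributions_lower_bound (k : ℕ)
    (g : (Fin k → Bool) → (Fin k → Bool) → Bool) (h : ℕ) (hh : 1 ≤ h) :
    ∃ b : Bool, ∀ μ : Finset (Fin k → Bool) × Finset (Fin k → Bool) → ℝ,
      IsDistribution μ →
      (∀ R, μ R ≠ 0 → ∀ x ∈ R.1, ∀ y ∈ R.2, g x y = b) →
      ∃ X Y : Finset (Fin k → Bool),
        (2 : ℝ) ^ ((k : ℤ) - h) ≤ X.card ∧
        (2 : ℝ) ^ ((k : ℤ) - h) ≤ Y.card ∧
        hitProb μ X Y ≤ (2 : ℝ) ^ ((k : ℤ) - 2 * h + 1) :=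
  hitting_distributions_lower_bound_general k g h
end

section
/- There is a universal constant C such that for every k ≥ 1, every (possibly partial) function g : {0,1}^k × {0,1}^k → {0,1}, every b ∈ {0,1} and every positive integer h: if g has a (1/20, h)-hitting distribution over its b-monochromatic rectangles, then g has a (1/10, h)-hitting distribution over its b-monochromatic rectangles whose support has size at most C·2^k. -/
open Finset

/-!
Sample `t = 50 (|α| + |β|)` rectangles independently from `μ` and take the empirical distribution
of the sample, whose support has at most `t` elements. Each sample misses a fixed large `X × Y`
with probability at most `1/20`, so `E[3 ^ #misses] ≤ (1 + 2/20) ^ t`. Summed over the at most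
`2 ^ (|α| + |β|)` large pairs this stays below `3 ^ (t/10)`, so some sample in the support of the
product measure misses every large `X × Y` fewer than `t/10` times.
-/

section Empirical

variable {ι : Type*} [DecidableEq ι] {t : ℕ}

noncomputable def empirical (f : Fin t → ι) (R : ι) : ℝ := #{i | f i = R} / t

theorem empirical_nonneg (f : Fin t → ι) (R : ι) : 0 ≤ empirical f R := by
  unfold empirical
  positivity

theorem sum_empirical (f : Fin t → ι) (S : Finset ι) :
    ∑ R ∈ S, empirical f R = #{i | f i ∈ S} / t := by
  simp only [empirical, ← sum_div, ← Nat.cast_sum, sum_card_fiberwise_eq_card_filter]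

theorem sum_empirical_univ [Fintype ι] (f : Fin t → ι) (ht : t ≠ 0) : ∑ R, empirical f R = 1 := by
  simp [sum_empirical, ht]

theorem exists_eq_of_empirical_ne_zero {f : Fin t → ι} {R : ι} (h : empirical f R ≠ 0) :
    ∃ i, f i = R := by
  by_contra! hR
  simp [empirical, hR] at h

theorem card_support_empirical_le (f : Fin t → ι) : Nat.card {R // empirical f R ≠ 0} ≤ t := by
  choose g hg using fun R : {R // empirical f R ≠ 0} => exists_eq_of_empirical_ne_zero R.2
  simpa using Nat.card_le_card_of_injective g
    fun R R' h => Subtype.ext ((hg R).symm.trans (h ▸ hg R'))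

end Empirical

section Sampling

variable {ι : Type*} [Fintype ι] [DecidableEq ι]

theorem sum_prod_mul_pow_card_not_mem (μ : ι → ℝ) (S : Finset ι) (c : ℝ) (t : ℕ) :
    ∑ f : Fin t → ι, (∏ i, μ (f i)) * c ^ #{i | f i ∉ S} =
      (∑ R, μ R * if R ∈ S then 1 else c) ^ t := by
  rw [← Fin.prod_const, Fintype.prod_sum]
  refine Fintype.sum_congr _ _ fun f => ?_
  rw [prod_mul_distrib, prod_ite, prod_const_one, one_mul, prod_const]

theorem sum_prod_mul_three_pow_card_not_mem_le {μ : ι → ℝ} (hμ0 : ∀ R, 0 ≤ μ R)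
    (hμ1 : ∑ R, μ R = 1) {S : Finset ι} (hS : 19 / 20 ≤ ∑ R ∈ S, μ R) (t : ℕ) :
    ∑ f : Fin t → ι, (∏ i, μ (f i)) * 3 ^ #{i | f i ∉ S} ≤ (11 / 10) ^ t := by
  rw [sum_prod_mul_pow_card_not_mem]
  gcongr
  · exact sum_nonneg fun R _ => mul_nonneg (hμ0 R) (by split_ifs <;> norm_num)
  · have hsplit (R : ι) :
        μ R * (if R ∈ S then 1 else 3) = 3 * μ R - 2 * if R ∈ S then μ R else 0 := by
      split_ifs <;> ring
    simp only [hsplit, sum_sub_distrib, ← mul_sum, sum_ite_mem, univ_inter, hμ1]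
    linarith

theorem exists_sample_card_not_mem_lt {μ : ι → ℝ} (hμ0 : ∀ R, 0 ≤ μ R) (hμ1 : ∑ R, μ R = 1)
    {𝒮 : Finset (Finset ι)} {n : ℕ} (hn : n ≠ 0) (h𝒮 : #𝒮 ≤ 2 ^ n)
    (hS : ∀ S ∈ 𝒮, 19 / 20 ≤ ∑ R ∈ S, μ R) :
    ∃ f : Fin (50 * n) → ι, (∀ i, μ (f i) ≠ 0) ∧ ∀ S ∈ 𝒮, #{i | f i ∉ S} < 5 * n := by
  set P : (Fin (50 * n) → ι) → ℝ := fun f => ∏ i, μ (f i)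
  have hP : ∑ f, P f = 1 := by simp only [P, ← Fintype.prod_sum, hμ1, prod_const_one]
  have hweight : ∑ f, P f * ∑ S ∈ 𝒮, (3 : ℝ) ^ #{i | f i ∉ S} < ∑ f, P f * 3 ^ (5 * n) :=
    calc ∑ f, P f * ∑ S ∈ 𝒮, (3 : ℝ) ^ #{i | f i ∉ S}
        = ∑ S ∈ 𝒮, ∑ f, P f * 3 ^ #{i | f i ∉ S} := by simp only [mul_sum]; exact sum_comm
      _ ≤ ∑ S ∈ 𝒮, (11 / 10 : ℝ) ^ (50 * n) :=
        sum_le_sum fun S hS𝒮 => sum_prod_mul_three_pow_card_not_mem_le hμ0 hμ1 (hS S hS𝒮) _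
      _ ≤ 2 ^ n * (11 / 10 : ℝ) ^ (50 * n) := by
        rw [sum_const, nsmul_eq_mul]
        gcongr
        exact_mod_cast h𝒮
      _ = (2 * (11 / 10) ^ 50) ^ n := by rw [mul_pow, pow_mul]
      _ < (3 ^ 5) ^ n := pow_lt_pow_left₀ (by norm_num) (by positivity) hn
      _ = ∑ f, P f * 3 ^ (5 * n) := by rw [← sum_mul, hP, one_mul, pow_mul]
  obtain ⟨f, -, hf⟩ := exists_lt_of_sum_lt hweight
  have hPf : P f ≠ 0 := fun h0 => by simp [h0] at hf
  have hmisses := lt_of_mul_lt_mul_left hf (prod_nonneg fun i _ => hμ0 (f i))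
  refine ⟨f, fun i => prod_ne_zero_iff.mp hPf i (mem_univ i), fun S hS𝒮 => ?_⟩
  refine (pow_lt_pow_iff_right₀ (by norm_num : (1 : ℝ) < 3)).mp (lt_of_le_of_lt ?_ hmisses)
  exact single_le_sum (f := fun S => (3 : ℝ) ^ #{i | f i ∉ S}) (fun _ _ => by positivity) hS𝒮

end Sampling

section Rectangles

variable {α β : Type*} [Fintype α] [Fintype β] [DecidableEq α] [DecidableEq β]

def hitSet (X : Finset α) (Y : Finset β) : Finset (Finset α × Finset β) :=
  {R | (R.1 ∩ X).Nonempty ∧ (R.2 ∩ Y).Nonempty}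

theorem hitProb_eq_sum_hitSet (μ : Finset α × Finset β → ℝ) (X : Finset α) (Y : Finset β) :
    hitProb μ X Y = ∑ R ∈ hitSet X Y, μ R :=
  rfl

theorem IsHitting.exists_sparse [Nonempty α] {μ : Finset α × Finset β → ℝ} {h : ℤ}
    (hhit : IsHitting μ (1 / 20) h) (hμ : IsDistribution μ) :
    ∃ ν, IsDistribution ν ∧ (∀ R, ν R ≠ 0 → μ R ≠ 0) ∧ IsHitting ν (1 / 10) h ∧
      Nat.card {R // ν R ≠ 0} ≤ 50 * (Fintype.card α + Fintype.card β) := by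
  set n := Fintype.card α + Fintype.card β
  have hn : n ≠ 0 := (Nat.add_pos_left Fintype.card_pos _).ne'
  set large : Finset (Finset α × Finset β) :=
    {p | (2 : ℝ) ^ (-h) * Fintype.card α ≤ #p.1 ∧ (2 : ℝ) ^ (-h) * Fintype.card β ≤ #p.2}
  have h𝒮 : #(large.image fun p => hitSet p.1 p.2) ≤ 2 ^ n :=
    card_image_le.trans ((card_le_univ _).trans (by simp [n, pow_add]))
  have hS : ∀ S ∈ large.image fun p => hitSet p.1 p.2, 19 / 20 ≤ ∑ R ∈ S, μ R := by
    simp only [forall_mem_image, large, mem_filter]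
    rintro ⟨X, Y⟩ ⟨-, hX, hY⟩
    linarith [hitProb_eq_sum_hitSet μ X Y ▸ hhit X Y hX hY]
  obtain ⟨f, hfμ, hf⟩ := exists_sample_card_not_mem_lt hμ.1 hμ.2 hn h𝒮 hS
  refine ⟨empirical f, ⟨empirical_nonneg f, sum_empirical_univ f (by positivity)⟩, ?_, ?_,
    card_support_empirical_le f⟩
  · intro R hR
    obtain ⟨i, rfl⟩ := exists_eq_of_empirical_ne_zero hR
    exact hfμ i
  · intro X Y hX hY
    have hmiss := hf (hitSet X Y) (mem_image.mpr ⟨(X, Y), mem_filter.mpr ⟨mem_univ _, hX, hY⟩, rfl⟩)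
    have hsplit := card_filter_add_card_filter_not (s := univ) (fun i => f i ∈ hitSet X Y)
    rw [card_univ, Fintype.card_fin] at hsplit
    have hhits : 45 * n ≤ #{i | f i ∈ hitSet X Y} := by omega
    rw [hitProb_eq_sum_hitSet, sum_empirical, le_div_iff₀ (by positivity)]
    have : (45 * n : ℝ) ≤ #{i | f i ∈ hitSet X Y} := by exact_mod_cast hhits
    push_cast
    linarith

end Rectangles

/-- There is a universal constant `C` such that for every `k ≥ 1`, every
(possibly partial) `g : {0,1}^k × {0,1}^k → {0,1}`, every `b ∈ {0,1}` and every positive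
integer `h`: if `g` has a `(1/20, h)`-hitting distribution over its `b`-monochromatic
rectangles, then `g` has a `(1/10, h)`-hitting distribution over its `b`-monochromatic
rectangles whose support has size at most `C·2^k`. -/
theorem hitting_distribution_small_support :
    ∃ C : ℝ, ∀ k : ℕ, 1 ≤ k →
      ∀ g : (Fin k → Bool) → (Fin k → Bool) → Option Bool, ∀ b : Bool, ∀ h : ℕ, 1 ≤ h →
        (∃ μ : Finset (Fin k → Bool) × Finset (Fin k → Bool) → ℝ,
          IsDistribution μ ∧
          (∀ R, μ R ≠ 0 → ∀ x ∈ R.1, ∀ y ∈ R.2, g x y = some b) ∧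
          IsHitting μ (1 / 20) (h : ℤ)) →
        (∃ μ : Finset (Fin k → Bool) × Finset (Fin k → Bool) → ℝ,
          IsDistribution μ ∧
          (∀ R, μ R ≠ 0 → ∀ x ∈ R.1, ∀ y ∈ R.2, g x y = some b) ∧
          IsHitting μ (1 / 10) (h : ℤ) ∧
          (Nat.card {R : Finset (Fin k → Bool) × Finset (Fin k → Bool) // μ R ≠ 0} : ℝ)
            ≤ C * 2 ^ k) := by
  refine ⟨100, fun k _ g b h _ ⟨μ, hμ, hmono, hhit⟩ => ?_⟩
  obtain ⟨ν, hν, hsupp, hνhit, hcard⟩ := hhit.exists_sparse hμ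
  refine ⟨ν, hν, fun R hR => hmono R (hsupp R hR), hνhit, ?_⟩
  have hcube : Fintype.card (Fin k → Bool) = 2 ^ k := by simp
  rw [hcube] at hcard
  calc (Nat.card {R // ν R ≠ 0} : ℝ) ≤ (50 * (2 ^ k + 2 ^ k) : ℕ) := by exact_mod_cast hcard
    _ = 100 * 2 ^ k := by push_cast; ring
end

section
/- Let g : {0,1}^k × {0,1}^k → {0,1} be a (possibly partial) function, let δ < 1 be a nonnegative real and h a positive integer, and suppose there exist two (δ,h)-hitting distributions μ₀ and μ₁, where μ_b is over the b-monochromatic rectangles of g (b ∈ {0,1}). Then for each b ∈ {0,1} the support of μ_b has size at least 2^h. -/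
open Finset

lemma thin_of_conflict {α β : Type*} [Fintype α] [Fintype β] [DecidableEq α] [DecidableEq β]
    (μ μ' : Finset α × Finset β → ℝ) (δ : ℝ) (hδ1 : δ < 1) (h : ℤ)
    (hhit : IsHitting μ δ h)
    (conf : ∀ R, μ R ≠ 0 → ∀ S, μ' S ≠ 0 →
      ¬ ((R.1 ∩ S.1).Nonempty ∧ (R.2 ∩ S.2).Nonempty))
    (S : Finset α × Finset β) (hS : μ' S ≠ 0) :
    (S.1.card : ℝ) < 2 ^ (-h) * (Fintype.card α : ℝ) ∨
      (S.2.card : ℝ) < 2 ^ (-h) * (Fintype.card β : ℝ) := by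
  by_contra hc
  push_neg at hc
  have h1 := hhit S.1 S.2 hc.1 hc.2
  have h0 : hitProb μ S.1 S.2 = 0 := by
    apply Finset.sum_eq_zero
    intro R hR
    simp only [Finset.mem_filter] at hR
    by_contra hμ
    exact conf R hμ S hS ⟨hR.2.1, hR.2.2⟩
  rw [h0] at h1
  linarith

lemma avoid_card_bound {σ γ : Type*} [Fintype γ] [DecidableEq γ] (h : ℕ)
    (T : Finset σ) (f : σ → Finset γ) (t : ℝ) (ht : 0 ≤ t)
    (hbound : ∀ R ∈ T, ((f R).card : ℝ) ≤ t) (hTcard : (T.card : ℝ) ≤ 2 ^ h - 1)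
    (hteq : t = 2 ^ (-(h:ℤ)) * (Fintype.card γ : ℝ)) [DecidableEq σ] :
    t ≤ ((Finset.univ \ T.biUnion f).card : ℝ) := by
  have hpow : (2:ℝ) ^ h * (2:ℝ) ^ (-(h:ℤ)) = 1 := by
    rw [zpow_neg, zpow_natCast]
    field_simp
  have h1 : ((T.biUnion f).card : ℝ) ≤ ∑ R ∈ T, ((f R).card : ℝ) := by
    have := Finset.card_biUnion_le (s := T) (t := f)
    exact_mod_cast Nat.cast_le.2 this
  have h2 : ∑ R ∈ T, ((f R).card : ℝ) ≤ T.card * t := by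
    calc ∑ R ∈ T, ((f R).card : ℝ) ≤ ∑ _R ∈ T, t := Finset.sum_le_sum hbound
      _ = T.card * t := by rw [Finset.sum_const, nsmul_eq_mul]
  have h3 : ((Finset.univ \ T.biUnion f).card : ℝ)
      = (Fintype.card γ : ℝ) - ((T.biUnion f).card : ℝ) := by
    rw [Finset.card_sdiff_of_subset (Finset.subset_univ _)]
    rw [Nat.cast_sub (Finset.card_le_card (Finset.subset_univ _))]
    simp
  have hc2 : (2:ℝ) ^ h * t = (Fintype.card γ : ℝ) := by
    rw [hteq, ← mul_assoc, hpow, one_mul]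
  nlinarith [mul_le_mul_of_nonneg_right hTcard ht]

lemma support_lb {α β : Type*} [Fintype α] [Fintype β] [DecidableEq α] [DecidableEq β]
    (μ : Finset α × Finset β → ℝ) (δ : ℝ) (hδ1 : δ < 1) (h : ℕ)
    (hhit : IsHitting μ δ (h : ℤ))
    (thin : ∀ R, μ R ≠ 0 → (R.1.card : ℝ) < 2 ^ (-(h:ℤ)) * (Fintype.card α : ℝ) ∨
      (R.2.card : ℝ) < 2 ^ (-(h:ℤ)) * (Fintype.card β : ℝ)) :
    2 ^ h ≤ Nat.card {R : Finset α × Finset β // μ R ≠ 0} := by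
  classical
  by_contra hlt
  push_neg at hlt
  set tα : ℝ := 2 ^ (-(h:ℤ)) * (Fintype.card α : ℝ) with htα
  set tβ : ℝ := 2 ^ (-(h:ℤ)) * (Fintype.card β : ℝ) with htβ
  set S := Finset.univ.filter (fun R : Finset α × Finset β => μ R ≠ 0) with hSdef
  have hcard : Nat.card {R : Finset α × Finset β // μ R ≠ 0} = S.card := by
    rw [Nat.card_eq_fintype_card, Fintype.card_subtype]
  have hm : (S.card : ℝ) ≤ 2 ^ h - 1 := by
    rw [hcard] at hlt
    have : S.card + 1 ≤ 2 ^ h := hlt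
    have := Nat.cast_le (α := ℝ) |>.2 this
    push_cast at this
    linarith
  set S₁ := S.filter (fun R => (R.1.card : ℝ) < tα) with hS₁
  set S₂ := S \ S₁ with hS₂
  set X := Finset.univ \ S₁.biUnion Prod.fst with hX
  set Y := Finset.univ \ S₂.biUnion Prod.snd with hY
  have htα0 : (0:ℝ) ≤ tα := by positivity
  have htβ0 : (0:ℝ) ≤ tβ := by positivity
  have hxcard : tα ≤ (X.card : ℝ) := by
    refine avoid_card_bound h S₁ Prod.fst tα htα0 ?_ ?_ htα
    · intro R hR
      exact le_of_lt (Finset.mem_filter.1 hR).2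
    · exact le_trans (Nat.cast_le.2 (Finset.card_le_card (Finset.filter_subset _ _))) hm
  have hycard : tβ ≤ (Y.card : ℝ) := by
    refine avoid_card_bound h S₂ Prod.snd tβ htβ0 ?_ ?_ htβ
    · intro R hR
      rw [hS₂, Finset.mem_sdiff] at hR
      have hμR : μ R ≠ 0 := (Finset.mem_filter.1 hR.1).2
      rcases thin R hμR with h1 | h2
      · exact absurd (Finset.mem_filter.2 ⟨hR.1, h1⟩) hR.2
      · exact le_of_lt h2
    · exact le_trans (Nat.cast_le.2 (Finset.card_le_card (Finset.sdiff_subset))) hm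
  have h1 := hhit X Y hxcard hycard
  have h0 : hitProb μ X Y = 0 := by
    apply Finset.sum_eq_zero
    intro R hR
    simp only [Finset.mem_filter, Finset.mem_univ, true_and] at hR
    by_contra hμ
    have hRS : R ∈ S := by simp [hSdef, hμ]
    by_cases hc : R ∈ S₁
    · obtain ⟨x, hx1⟩ := hR.1
      rw [Finset.mem_inter] at hx1
      have hmem : x ∈ S₁.biUnion Prod.fst := Finset.mem_biUnion.2 ⟨R, hc, hx1.1⟩
      have := (Finset.mem_sdiff.1 hx1.2).2
      exact this hmem
    · have h2 : R ∈ S₂ := Finset.mem_sdiff.2 ⟨hRS, hc⟩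
      obtain ⟨y, hy1⟩ := hR.2
      rw [Finset.mem_inter] at hy1
      have hmem : y ∈ S₂.biUnion Prod.snd := Finset.mem_biUnion.2 ⟨R, h2, hy1.1⟩
      have := (Finset.mem_sdiff.1 hy1.2).2
      exact this hmem
  rw [h0] at h1
  linarith

/-- Let `g : {0,1}^k × {0,1}^k → {0,1}` be a (possibly partial) function,
`δ < 1` a nonnegative real and `h` a positive integer, and suppose there exist two
`(δ,h)`-hitting distributions `μ₀` and `μ₁`, where `μ_b` is over the `b`-monochromatic
rectangles of `g`. Then for each `b ∈ {0,1}` the support of `μ_b` has size at least `2^h`. -/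
theorem hitting_distribution_support_lower_bound (k : ℕ)
    (g : (Fin k → Bool) → (Fin k → Bool) → Option Bool)
    (δ : ℝ) (hδ0 : 0 ≤ δ) (hδ1 : δ < 1) (h : ℕ) (hh : 1 ≤ h)
    (μ₀ μ₁ : Finset (Fin k → Bool) × Finset (Fin k → Bool) → ℝ)
    (hd₀ : IsDistribution μ₀) (hd₁ : IsDistribution μ₁)
    (hm₀ : ∀ R, μ₀ R ≠ 0 → ∀ x ∈ R.1, ∀ y ∈ R.2, g x y = some false)
    (hm₁ : ∀ R, μ₁ R ≠ 0 → ∀ x ∈ R.1, ∀ y ∈ R.2, g x y = some true)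
    (hh₀ : IsHitting μ₀ δ (h : ℤ)) (hh₁ : IsHitting μ₁ δ (h : ℤ)) :
    2 ^ h ≤ Nat.card {R : Finset (Fin k → Bool) × Finset (Fin k → Bool) // μ₀ R ≠ 0} ∧
    2 ^ h ≤ Nat.card {R : Finset (Fin k → Bool) × Finset (Fin k → Bool) // μ₁ R ≠ 0} := by
  have mk : ∀ (νa νb : Finset (Fin k → Bool) × Finset (Fin k → Bool) → ℝ)
      (ba bb : Bool), ba ≠ bb →
      (∀ R, νa R ≠ 0 → ∀ x ∈ R.1, ∀ y ∈ R.2, g x y = some ba) →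
      (∀ R, νb R ≠ 0 → ∀ x ∈ R.1, ∀ y ∈ R.2, g x y = some bb) →
      ∀ R, νa R ≠ 0 → ∀ S, νb S ≠ 0 →
      ¬ ((R.1 ∩ S.1).Nonempty ∧ (R.2 ∩ S.2).Nonempty) := by
    rintro νa νb ba bb hne ha hb R hR S hS ⟨⟨x, hx⟩, ⟨y, hy⟩⟩
    rw [Finset.mem_inter] at hx hy
    have h1 := ha R hR x hx.1 y hy.1
    have h2 := hb S hS x hx.2 y hy.2
    rw [h1] at h2
    simp only [Option.some.injEq] at h2
    exact hne h2
  constructor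
  · exact support_lb μ₀ δ hδ1 h hh₀ (fun R hR =>
      thin_of_conflict μ₁ μ₀ δ hδ1 (h : ℤ) hh₁
        (mk μ₁ μ₀ true false (by simp) hm₁ hm₀) R hR)
  · exact support_lb μ₁ δ hδ1 h hh₁ (fun R hR =>
      thin_of_conflict μ₀ μ₁ δ hδ1 (h : ℤ) hh₀
        (mk μ₀ μ₁ false true (by simp) hm₀ hm₁) R hR)
end

section
/- For every real ε > 0 and every integer n ≥ 2 there exist a positive integer m and a nonempty reducible set X ⊆ {0,1,…,m−1}^n such that for all i ∈ [n] it holds that AvgDeg_i(X) ≥ n − ε. -/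
open Finset

/-- Insert the value `a` at coordinate `i` of the partial tuple `z` (defined on all
coordinates except `i`). -/
def insertAt {A : Type*} {n : ℕ} (i : Fin n) (z : {j : Fin n // j ≠ i} → A) (a : A) :
    Fin n → A :=
  fun j => if h : j = i then a else z ⟨j, h⟩

/-- The projection `X_{[n]∖{i}}` of `X ⊆ A^n` forgetting the `i`-th coordinate. -/
def projSet {A : Type*} [DecidableEq A] {n : ℕ} (i : Fin n) (X : Finset (Fin n → A)) :
    Finset ({j : Fin n // j ≠ i} → A) :=
  X.image (fun x j => x j.1)

/-- `AvgDeg_i(X) = |X| / |X_{[n]∖{i}}|`, as a real number. -/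
noncomputable def avgDeg {A : Type*} [DecidableEq A] {n : ℕ} (i : Fin n)
    (X : Finset (Fin n → A)) : ℝ :=
  (X.card : ℝ) / ((projSet i X).card : ℝ)

/-- `MinDeg_i(X)`: the minimum over `z ∈ X_{[n]∖{i}}` of the number of `a ∈ A` such that
inserting `a` at coordinate `i` of `z` yields an element of `X`. -/
noncomputable def minDeg {A : Type*} [Fintype A] [DecidableEq A] {n : ℕ} (i : Fin n)
    (X : Finset (Fin n → A)) : ℕ :=
  sInf ((fun z => (Finset.univ.filter (fun a : A => insertAt i z a ∈ X)).card) ''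
    (projSet i X : Set ({j : Fin n // j ≠ i} → A)))

/-- `X ⊆ A^n` is *reducible* if every nonempty `Y ⊆ X` has some coordinate `i` with
`MinDeg_i(Y) = 1`. -/
def Reducible {A : Type*} [Fintype A] [DecidableEq A] {n : ℕ}
    (X : Finset (Fin n → A)) : Prop :=
  ∀ Y ⊆ X, Y.Nonempty → ∃ i : Fin n, minDeg i Y = 1

lemma pow_lb (b : ℝ) (hb : 0 ≤ b) : ∀ k : ℕ, b^(k+1) + (k+1)*b^k ≤ (b+1)^(k+1) := by
  intro k
  induction k with
  | zero => simp
  | succ k ih =>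
    have hbk : 0 ≤ b ^ k := pow_nonneg hb k
    have e1 : (b:ℝ)^(k+2) = b * b^(k+1) := by ring
    have e2 : (b+1)^(k+2) = (b+1) * (b+1)^(k+1) := by ring
    have e3 : (b:ℝ)^(k+1) = b * b^k := by ring
    push_cast
    push_cast at ih
    nlinarith [pow_nonneg hb (k+1)]

lemma pow_ub (b : ℝ) (hb : 0 ≤ b) : ∀ k : ℕ, (b+1)^(k+1) ≤ b^(k+1) + (k+1)*(b+1)^k := by
  intro k
  induction k with
  | zero => simp
  | succ k ih =>
    have hle : b^(k+1) ≤ (b+1)^(k+1) := pow_le_pow_left₀ hb (by linarith) _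
    have e1 : (b:ℝ)^(k+2) = b * b^(k+1) := by ring
    have e2 : (b+1)^(k+2) = (b+1) * (b+1)^(k+1) := by ring
    have hb1 : (0:ℝ) ≤ (b+1)^(k+1) := by positivity
    have e4 : (b+1)^(k+1) = (b+1) * (b+1)^k := by ring
    push_cast
    push_cast at ih
    nlinarith [mul_le_mul_of_nonneg_left ih (by linarith : (0:ℝ) ≤ b+1)]

lemma insertAt_proj {A : Type*} {n : ℕ} (i : Fin n) (x : Fin n → A) :
    insertAt i (fun j => x j.1) (x i) = x := by
  funext j
  unfold insertAt
  split
  · next h => subst h; rfl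
  · rfl

/-- X is reducible. -/
lemma zeroSet_reducible {n m : ℕ} [NeZero m] :
    Reducible ((univ : Finset (Fin n → Fin m)).filter (fun x => ∃ i, x i = 0)) := by
  intro Y hYX hY
  obtain ⟨y, hyY, hymax⟩ := Y.exists_max_image (fun x => ∑ j, (x j : ℕ)) hY
  obtain ⟨i, hyi⟩ := (mem_filter.mp (hYX hyY)).2
  refine ⟨i, ?_⟩
  set z : {j : Fin n // j ≠ i} → Fin m := fun j => y j.1 with hz
  have hzmem : z ∈ projSet i Y := mem_image.mpr ⟨y, hyY, rfl⟩
  -- the filter at z is {y i}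
  have hfilter : (Finset.univ.filter (fun a : Fin m => insertAt i z a ∈ Y)) = {y i} := by
    ext a
    simp only [mem_filter, mem_univ, true_and, mem_singleton]
    constructor
    · intro ha
      have hsum := hymax _ ha
      have hsplit : ∀ x : Fin n → Fin m, ∑ j, (x j : ℕ)
          = (x i : ℕ) + ∑ j ∈ univ.erase i, (x j : ℕ) := by
        intro x
        exact (Finset.add_sum_erase _ _ (mem_univ i)).symm
      rw [hsplit, hsplit] at hsum
      have heq : ∑ j ∈ univ.erase i, ((insertAt i z a) j : ℕ)
          = ∑ j ∈ univ.erase i, (y j : ℕ) := by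
        refine Finset.sum_congr rfl fun j hj => ?_
        have hji : j ≠ i := (Finset.mem_erase.mp hj).1
        simp [insertAt, hji, hz]
      have hai : (insertAt i z a) i = a := by simp [insertAt]
      rw [heq, hai, hyi] at hsum
      have : (a : ℕ) = 0 := by
        have := Fin.val_zero m
        omega
      rw [hyi]
      exact Fin.ext (by simpa using this)
    · rintro rfl
      rw [hz, insertAt_proj]
      exact hyY
  have h1mem : (1 : ℕ) ∈ ((fun z' => (Finset.univ.filter
      (fun a : Fin m => insertAt i z' a ∈ Y)).card) ''
      (projSet i Y : Set ({j : Fin n // j ≠ i} → Fin m))) := by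
    exact ⟨z, hzmem, by simp [hfilter]⟩
  have hlb : ∀ s ∈ ((fun z' => (Finset.univ.filter
      (fun a : Fin m => insertAt i z' a ∈ Y)).card) ''
      (projSet i Y : Set ({j : Fin n // j ≠ i} → Fin m))), 1 ≤ s := by
    rintro s ⟨z', hz', rfl⟩
    obtain ⟨x, hxY, hxz⟩ := mem_image.mp (by exact_mod_cast hz')
    refine Finset.card_pos.mpr ⟨x i, ?_⟩
    rw [mem_filter]
    refine ⟨mem_univ _, ?_⟩
    rw [← hxz, insertAt_proj]
    exact hxY
  exact le_antisymm (Nat.sInf_le h1mem) (le_csInf ⟨1, h1mem⟩ hlb)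

/-- For every real `ε > 0` and every integer `n ≥ 2` there exist a positive
integer `m` and a nonempty reducible `X ⊆ {0,…,m−1}^n` such that `AvgDeg_i(X) ≥ n − ε`
for all `i ∈ [n]`. -/
theorem reducible_set_with_large_avg_degree (ε : ℝ) (hε : 0 < ε) (n : ℕ) (hn : 2 ≤ n) :
    ∃ m : ℕ, 0 < m ∧ ∃ X : Finset (Fin n → Fin m), X.Nonempty ∧ Reducible X ∧
      ∀ i : Fin n, (n : ℝ) - ε ≤ avgDeg i X := by
  obtain ⟨m, hm2, h1⟩ : ∃ m : ℕ, 2 ≤ m ∧ (n:ℝ)^2 ≤ ε * m := by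
    refine ⟨max 2 (Nat.ceil ((n : ℝ)^2 / ε)), le_max_left _ _, ?_⟩
    have h := Nat.le_ceil ((n : ℝ)^2 / ε)
    have h2 : ((Nat.ceil ((n : ℝ)^2 / ε) : ℕ) : ℝ)
        ≤ ((max 2 (Nat.ceil ((n : ℝ)^2 / ε)) : ℕ) : ℝ) := by
      exact_mod_cast le_max_right _ _
    rw [div_le_iff₀ hε] at h
    nlinarith [h, h2, hε]
  have hm : 0 < m := by omega
  have hm1 : 1 ≤ m := hm
  haveI : NeZero m := ⟨hm.ne'⟩
  have hεm : (n:ℝ) * ((n:ℝ) - 1) ≤ ε * (m:ℝ) := by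
    nlinarith [show (0:ℝ) ≤ (n:ℝ) from Nat.cast_nonneg n]
  refine ⟨m, hm, (univ : Finset (Fin n → Fin m)).filter (fun x => ∃ i, x i = 0), ?_, ?_, ?_⟩
  · exact ⟨fun _ => 0, mem_filter.mpr ⟨mem_univ _, ⟨0, by omega⟩, rfl⟩⟩
  · exact zeroSet_reducible
  · intro i
    -- cardinality of the projection
    have hproj : projSet i ((univ : Finset (Fin n → Fin m)).filter (fun x => ∃ i, x i = 0))
        = univ := by
      apply Finset.eq_univ_of_forall
      intro z
      refine mem_image.mpr ⟨insertAt i z 0, mem_filter.mpr ⟨mem_univ _, ⟨i, by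
        simp [insertAt]⟩⟩, funext fun j => ?_⟩
      simp [insertAt, j.2]
    have hcardsub : Fintype.card {j : Fin n // j ≠ i} = n - 1 := by
      simp [Fintype.card_subtype, filter_ne', Finset.card_erase_of_mem]
    have hcardproj : (projSet i ((univ : Finset (Fin n → Fin m)).filter
        (fun x => ∃ i, x i = 0))).card = m^(n-1) := by
      rw [hproj, card_univ, Fintype.card_fun, Fintype.card_fin, hcardsub]
    -- cardinality of X
    have hXeq : (univ : Finset (Fin n → Fin m)).filter (fun x => ∃ i, x i = 0)
        = univ \ Fintype.piFinset (fun _ : Fin n => univ.filter (fun a : Fin m => a ≠ 0)) := by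
      ext x
      simp [Fintype.mem_piFinset, not_forall]
    have hpi : (Fintype.piFinset (fun _ : Fin n => univ.filter
        (fun a : Fin m => a ≠ 0))).card = (m-1)^n := by
      rw [Fintype.card_piFinset]
      simp [filter_ne', Finset.card_erase_of_mem]
    have hcardX : ((univ : Finset (Fin n → Fin m)).filter (fun x => ∃ i, x i = 0)).card
        = m^n - (m-1)^n := by
      rw [hXeq, card_sdiff_of_subset (subset_univ _), hpi, card_univ, Fintype.card_fun,
        Fintype.card_fin, Fintype.card_fin]
    have hpow_le : (m-1)^n ≤ m^n := Nat.pow_le_pow_left (Nat.sub_le m 1) n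
    -- now the analytic estimate
    rw [avgDeg, hcardproj, hcardX]
    have hm1' : ((m-1 : ℕ) : ℝ) = (m:ℝ) - 1 := by
      rw [Nat.cast_sub hm1, Nat.cast_one]
    have hcast : ((m^n - (m-1)^n : ℕ) : ℝ) = (m:ℝ)^n - ((m:ℝ)-1)^n := by
      rw [Nat.cast_sub hpow_le]
      push_cast [hm1']
      ring
    rw [hcast]
    have hpos : (0:ℝ) < ((m^(n-1) : ℕ) : ℝ) := by positivity
    rw [le_div_iff₀ hpos]
    obtain ⟨k, rfl⟩ : ∃ k, n = k + 2 := ⟨n - 2, (Nat.sub_add_cancel hn).symm⟩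
    set b : ℝ := (m:ℝ) - 1 with hb_def
    have hb : 0 ≤ b := by
      have : (2:ℝ) ≤ m := by exact_mod_cast hm2
      simp only [hb_def]; linarith
    have hbm : b + 1 = (m:ℝ) := by simp [hb_def]
    have f1 := pow_lb b hb (k+1)
    have f2 := pow_ub b hb k
    have f3 : ((k:ℝ)+2) * ((k:ℝ)+1) ≤ ε * (b+1) := by
      rw [hbm]
      push_cast at hεm
      nlinarith [hεm]
    have f4 : (0:ℝ) ≤ (b+1)^k := by positivity
    have e : (b+1)^(k+1) = (b+1)*(b+1)^k := by ring
    have hcast2 : ((m^(k+2-1) : ℕ) : ℝ) = (b+1)^(k+1) := by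
      rw [hbm]; push_cast; ring
    rw [hcast2, ← hbm]
    push_cast
    push_cast at f1 f2
    nlinarith [f1, f2, f3, f4, e,
      mul_le_mul_of_nonneg_right f3 f4,
      mul_le_mul_of_nonneg_left f2 (show (0:ℝ) ≤ (k:ℝ)+2 by positivity)]
end

section
/- Let s, m, n be positive integers and let X ⊆ {0,1,…,m−1}^n be reducible. Then for every nonempty Y ⊆ In(X,s) there exists i ∈ [n] such that MinDeg_i(Y) ≤ s. -/
open Finset

/-- `In(X, s) ⊆ {0,…,sm−1}^n` consists of all tuples `(s·x₁+r₁, …, s·x_n+r_n)` with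
`(x₁,…,x_n) ∈ X` and `r₁,…,r_n ∈ {0,…,s−1}`; equivalently, all `y` whose coordinatewise
quotients by `s` form an element of `X`. -/
def inflate {n m : ℕ} (s : ℕ) (X : Finset (Fin n → Fin m)) :
    Finset (Fin n → Fin (s * m)) :=
  Finset.univ.filter (fun y => ∃ x ∈ X, ∀ j, (y j : ℕ) / s = (x j : ℕ))

/-- Let `s, m, n` be positive integers and `X ⊆ {0,…,m−1}^n` reducible.
Then for every nonempty `Y ⊆ In(X,s)` there exists `i ∈ [n]` with `MinDeg_i(Y) ≤ s`. -/
theorem minDeg_inflate_le (s m n : ℕ) (hs : 1 ≤ s) (hm : 1 ≤ m) (hn : 1 ≤ n)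
    (X : Finset (Fin n → Fin m)) (hX : Reducible X) :
    ∀ Y : Finset (Fin n → Fin (s * m)), Y ⊆ inflate s X → Y.Nonempty →
      ∃ i : Fin n, minDeg i Y ≤ s := by
  intro Y hYsub hYne
  have hφlt : ∀ c : Fin (s * m), (c : ℕ) / s < m := by
    intro c
    exact Nat.div_lt_of_lt_mul c.2
  set φ : Fin (s * m) → Fin m := fun c => ⟨(c : ℕ) / s, hφlt c⟩ with hφ
  set Z : Finset (Fin n → Fin m) := Y.image (fun y => φ ∘ y) with hZ
  have hZsub : Z ⊆ X := by
    intro z hz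
    rw [hZ, Finset.mem_image] at hz
    obtain ⟨y, hy, rfl⟩ := hz
    have h2 := hYsub hy
    simp only [inflate, Finset.mem_filter] at h2
    obtain ⟨-, x, hx, hxy⟩ := h2
    have : φ ∘ y = x := funext fun j => Fin.ext (hxy j)
    rwa [this]
  have hZne : Z.Nonempty := hYne.image _
  obtain ⟨i, hi⟩ := hX Z hZsub hZne
  refine ⟨i, ?_⟩
  have hpne : ((fun z => (Finset.univ.filter (fun a => insertAt i z a ∈ Z)).card) ''
      (projSet i Z : Set ({j : Fin n // j ≠ i} → Fin m))).Nonempty := by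
    obtain ⟨ζ, hζ⟩ := hZne
    exact ⟨_, ⟨fun j => ζ j.1, by
      simp only [Finset.mem_coe, projSet, Finset.mem_image]
      exact ⟨ζ, hζ, rfl⟩, rfl⟩⟩
  have hmem := Nat.sInf_mem hpne
  rw [minDeg] at hi
  rw [hi] at hmem
  obtain ⟨zq, hzq, hcard⟩ := hmem
  rw [Finset.mem_coe, projSet, Finset.mem_image] at hzq
  obtain ⟨ζ, hζZ, hζp⟩ := hzq
  rw [hZ, Finset.mem_image] at hζZ
  obtain ⟨y, hyY, rfl⟩ := hζZ
  set w : {j : Fin n // j ≠ i} → Fin (s * m) := fun j => y j.1 with hw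
  have hwmem : w ∈ projSet i Y := by
    rw [projSet, Finset.mem_image]
    exact ⟨y, hyY, rfl⟩
  have hle : minDeg i Y ≤
      (Finset.univ.filter (fun b : Fin (s * m) => insertAt i w b ∈ Y)).card :=
    Nat.sInf_le ⟨w, hwmem, rfl⟩
  refine hle.trans ?_
  obtain ⟨a₀, ha₀⟩ := Finset.card_eq_one.mp hcard
  have key : ∀ b : Fin (s * m), insertAt i w b ∈ Y → φ b = a₀ := by
    intro b hb
    have heq : φ ∘ insertAt i w b = insertAt i zq (φ b) := by
      funext j
      simp only [Function.comp, insertAt]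
      split
      · rfl
      · next h =>
        have : zq ⟨j, h⟩ = φ (y j) := congrFun hζp.symm ⟨j, h⟩
        rw [this]
    have h1 : insertAt i zq (φ b) ∈ Z := by
      rw [← heq, hZ]
      exact Finset.mem_image_of_mem _ hb
    have : φ b ∈ Finset.univ.filter (fun a => insertAt i zq a ∈ Z) := by
      simp [h1]
    rw [ha₀] at this
    simpa using this
  have : (Finset.univ.filter (fun b : Fin (s * m) => insertAt i w b ∈ Y)).card ≤
      (Finset.univ : Finset (Fin s)).card := by
    refine Finset.card_le_card_of_injOn (fun b => (⟨(b : ℕ) % s, Nat.mod_lt _ hs⟩ : Fin s)) ?_ ?_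
    · intro b hb; exact Finset.mem_univ _
    · intro b₁ hb₁ b₂ hb₂ h
      simp only [Finset.coe_filter, Set.mem_setOf_eq, Finset.mem_univ, true_and] at hb₁ hb₂
      have hd : (b₁ : ℕ) / s = (b₂ : ℕ) / s := by
        have h2 := (key b₁ hb₁).trans (key b₂ hb₂).symm
        exact congrArg Fin.val h2
      have hmod : (b₁ : ℕ) % s = (b₂ : ℕ) % s := congrArg Fin.val h
      apply Fin.ext
      calc (b₁ : ℕ) = s * ((b₁ : ℕ) / s) + (b₁ : ℕ) % s := (Nat.div_add_mod _ _).symm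
        _ = s * ((b₂ : ℕ) / s) + (b₂ : ℕ) % s := by rw [hd, hmod]
        _ = (b₂ : ℕ) := Nat.div_add_mod _ _
  simpa using this
end

section
/- There exists m₀ such that for all m ≥ m₀ and all integers k ≥ 1 with 100·k ≤ 99·m, the function DISJ^m_k has a (1/10, ⌊k/100⌋)-hitting distribution over its 0-monochromatic rectangles. -/
open Finset

/-- The set of `k`-element subsets of `{1,…,m}`, the common domain of both inputs of
`DISJ^m_k`. -/
abbrev KSubset (m k : ℕ) := {s : Finset (Fin m) // s.card = k}

/-! Pick `i ∈ {1,…,m}` uniformly and take the rectangle of all pairs of `k`-sets containing `i`;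
any two sets in it meet. It hits `X × Y` iff `i` lies in both `⋃ X` and `⋃ Y`. If
`|X| ≥ 2^(-k/100)·C(m,k)`, then `C(|⋃ X|, k) ≥ |X|` together with `C(t,k)/C(m,k) ≤ (t/m)^k` and
`(19/20)^k < 2^(-k/100)` forces `|⋃ X| > 19m/20`. The same holds for `Y`, so `⋃ X ∩ ⋃ Y` has
more than `9m/10` points. -/

namespace Nat

theorem pow_mul_descFactorial_le_pow_mul_descFactorial {t m : ℕ} (htm : t ≤ m) (k : ℕ) :
    m ^ k * t.descFactorial k ≤ t ^ k * m.descFactorial k := by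
  have hpow : ∀ b : ℕ, b ^ k = ∏ _i ∈ range k, b := fun b => by rw [prod_const, card_range]
  rw [descFactorial_eq_prod_range, descFactorial_eq_prod_range, hpow, hpow, ← prod_mul_distrib,
    ← prod_mul_distrib]
  refine prod_le_prod' fun i _ => ?_
  rw [Nat.mul_sub, Nat.mul_sub, mul_comm m t]
  exact Nat.sub_le_sub_left (Nat.mul_le_mul_right i htm) _

theorem pow_mul_choose_le_pow_mul_choose {t m : ℕ} (htm : t ≤ m) (k : ℕ) :
    m ^ k * t.choose k ≤ t ^ k * m.choose k := by
  have h := pow_mul_descFactorial_le_pow_mul_descFactorial htm k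
  rw [descFactorial_eq_factorial_mul_choose, descFactorial_eq_factorial_mul_choose,
    mul_left_comm, mul_left_comm (t ^ k)] at h
  exact Nat.le_of_mul_le_mul_left h k.factorial_pos

theorem two_pow_div_hundred_mul_nineteen_pow_lt {k : ℕ} (hk : k ≠ 0) :
    2 ^ (k / 100) * 19 ^ k < 20 ^ k := by
  obtain ⟨q, r, hr, rfl⟩ : ∃ q r, r < 100 ∧ k = 100 * q + r :=
    ⟨k / 100, k % 100, mod_lt k (by norm_num), (div_add_mod k 100).symm⟩
  rw [show (100 * q + r) / 100 = q by omega]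
  have hpow : ∀ b : ℕ, b ^ (100 * q + r) = (b ^ 100) ^ q * b ^ r := fun b => by
    rw [pow_add, pow_mul]
  rw [hpow, hpow, ← mul_assoc, ← mul_pow]
  rcases q.eq_zero_or_pos with rfl | hq
  · simp only [mul_zero, zero_add] at hk ⊢
    simpa using Nat.pow_lt_pow_left (by norm_num : 19 < 20) hk
  · exact Nat.mul_lt_mul_of_lt_of_le (Nat.pow_lt_pow_left (by norm_num) hq.ne')
      (Nat.pow_le_pow_left (by norm_num) r) (by positivity)

end Nat

theorem card_le_choose_card_biUnion {α : Type*} [DecidableEq α] {k : ℕ}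
    (X : Finset {s : Finset α // #s = k}) : #X ≤ (#(X.biUnion Subtype.val)).choose k := by
  rw [← card_powersetCard]
  refine card_le_card_of_injOn Subtype.val (fun a ha => ?_) Subtype.val_injective.injOn
  rw [mem_coe, mem_powersetCard]
  exact ⟨subset_biUnion_of_mem Subtype.val ha, a.2⟩

theorem nineteen_mul_lt_twenty_mul_card_biUnion {m k : ℕ} (hk : k ≠ 0) (hkm : k ≤ m)
    (X : Finset (KSubset m k)) (hX : m.choose k ≤ 2 ^ (k / 100) * #X) :
    19 * m < 20 * #(X.biUnion Subtype.val) := by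
  by_contra! hsmall
  set t := #(X.biUnion Subtype.val)
  have htm : t ≤ m := by simpa using card_le_univ (X.biUnion Subtype.val)
  have hpos : 0 < m ^ k * m.choose k := by
    have := Nat.choose_pos hkm
    have : 0 < m := by omega
    positivity
  have hXt : m.choose k ≤ 2 ^ (k / 100) * t.choose k :=
    hX.trans (Nat.mul_le_mul_left _ (card_le_choose_card_biUnion X))
  have hcontra : 20 ^ k * (m ^ k * m.choose k) < 20 ^ k * (m ^ k * m.choose k) :=
    calc 20 ^ k * (m ^ k * m.choose k)
        ≤ 20 ^ k * (m ^ k * (2 ^ (k / 100) * t.choose k)) := by gcongr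
      _ = 2 ^ (k / 100) * 20 ^ k * (m ^ k * t.choose k) := by ring
      _ ≤ 2 ^ (k / 100) * 20 ^ k * (t ^ k * m.choose k) :=
          Nat.mul_le_mul_left _ (Nat.pow_mul_choose_le_pow_mul_choose htm k)
      _ = 2 ^ (k / 100) * (20 * t) ^ k * m.choose k := by ring
      _ ≤ 2 ^ (k / 100) * (19 * m) ^ k * m.choose k := by gcongr
      _ = 2 ^ (k / 100) * 19 ^ k * (m ^ k * m.choose k) := by ring
      _ < 20 ^ k * (m ^ k * m.choose k) :=
          Nat.mul_lt_mul_of_pos_right (Nat.two_pow_div_hundred_mul_nineteen_pow_lt hk) hpos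
  exact lt_irrefl _ hcontra

theorem choose_le_two_pow_mul_card {m k h : ℕ} {Z : Finset (KSubset m k)}
    (hZ : (2 : ℝ) ^ (-(h : ℤ)) * Fintype.card (KSubset m k) ≤ #Z) :
    m.choose k ≤ 2 ^ h * #Z := by
  rw [Fintype.card_finset_len, Fintype.card_fin, zpow_neg, zpow_natCast,
    inv_mul_le_iff₀ (by positivity)] at hZ
  exact_mod_cast hZ

theorem nine_mul_card_lt_ten_mul_card_inter {α : Type*} [Fintype α] [DecidableEq α]
    {U V : Finset α} (hU : 19 * Fintype.card α < 20 * #U) (hV : 19 * Fintype.card α < 20 * #V) :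
    9 * Fintype.card α < 10 * #(U ∩ V) := by
  have := card_union_add_card_inter U V
  have := card_le_univ (U ∪ V)
  omega

section UniformPushforward

variable {ι α β : Type*} [Fintype ι] [DecidableEq α] [DecidableEq β]

noncomputable def uniformPushforward (f : ι → Finset α × Finset β) (R : Finset α × Finset β) :
    ℝ :=
  #{i | f i = R} / Fintype.card ι

theorem isDistribution_uniformPushforward [Fintype α] [Fintype β] [Nonempty ι]
    (f : ι → Finset α × Finset β) :
    IsDistribution (uniformPushforward f) := by
  refine ⟨fun R => by unfold uniformPushforward; positivity, ?_⟩
  unfold uniformPushforward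
  rw [← sum_div, ← Nat.cast_sum, sum_card_fiberwise_eq_card_filter]
  simp

theorem exists_eq_of_uniformPushforward_ne_zero {f : ι → Finset α × Finset β}
    {R : Finset α × Finset β} (hR : uniformPushforward f R ≠ 0) : ∃ i, f i = R := by
  by_contra! h
  simp [uniformPushforward, h] at hR

theorem hitProb_uniformPushforward [Fintype α] [Fintype β] (f : ι → Finset α × Finset β)
    (X : Finset α) (Y : Finset β) :
    hitProb (uniformPushforward f) X Y =
      #{i | ((f i).1 ∩ X).Nonempty ∧ ((f i).2 ∩ Y).Nonempty} / Fintype.card ι := by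
  unfold hitProb uniformPushforward
  rw [← sum_div, ← Nat.cast_sum, sum_card_fiberwise_eq_card_filter]
  simp

end UniformPushforward

def pointRectangle {m k : ℕ} (i : Fin m) : Finset (KSubset m k) × Finset (KSubset m k) :=
  (({a | i ∈ a.1} : Finset _), ({b | i ∈ b.1} : Finset _))

theorem filter_mem_inter_nonempty_iff_mem_biUnion {m k : ℕ} (i : Fin m)
    (X : Finset (KSubset m k)) :
    (({a | i ∈ a.1} : Finset _) ∩ X).Nonempty ↔ i ∈ X.biUnion Subtype.val := by
  simp [Finset.Nonempty, and_comm]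

/-- There exists `m₀` such that for all `m ≥ m₀` and all integers `k ≥ 1`
with `100·k ≤ 99·m`, the function `DISJ^m_k` has a `(1/10, ⌊k/100⌋)`-hitting distribution
over its 0-monochromatic rectangles (rectangles on which the two subsets always
intersect). -/
theorem disjointness_zero_hitting :
    ∃ m₀ : ℕ, ∀ m : ℕ, m₀ ≤ m → ∀ k : ℕ, 1 ≤ k → 100 * k ≤ 99 * m →
      ∃ μ : Finset (KSubset m k) × Finset (KSubset m k) → ℝ,
        IsDistribution μ ∧
        (∀ R, μ R ≠ 0 → ∀ a ∈ R.1, ∀ b ∈ R.2, (a.1 ∩ b.1).Nonempty) ∧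
        IsHitting μ (1 / 10) ((k / 100 : ℕ) : ℤ) := by
  refine ⟨0, fun m _ k hk hkm => ?_⟩
  have : Nonempty (Fin m) := ⟨⟨0, by omega⟩⟩
  refine ⟨uniformPushforward pointRectangle, isDistribution_uniformPushforward _, ?_, ?_⟩
  · intro R hR a ha b hb
    obtain ⟨i, rfl⟩ := exists_eq_of_uniformPushforward_ne_zero hR
    exact ⟨i, mem_inter.2 ⟨(mem_filter.1 ha).2, (mem_filter.1 hb).2⟩⟩
  · intro X Y hX hY
    have hcover : ∀ Z : Finset (KSubset m k),
        (2 : ℝ) ^ (-((k / 100 : ℕ) : ℤ)) * Fintype.card (KSubset m k) ≤ #Z →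
        19 * Fintype.card (Fin m) < 20 * #(Z.biUnion Subtype.val) := fun Z hZ => by
      simpa using nineteen_mul_lt_twenty_mul_card_biUnion (by omega) (by omega) Z
        (choose_le_two_pow_mul_card hZ)
    have hinter : (9 * m : ℝ) < 10 * #(X.biUnion Subtype.val ∩ Y.biUnion Subtype.val) := by
      exact_mod_cast Fintype.card_fin m ▸
        nine_mul_card_lt_ten_mul_card_inter (hcover X hX) (hcover Y hY)
    simp only [hitProb_uniformPushforward, pointRectangle,
      filter_mem_inter_nonempty_iff_mem_biUnion, ← mem_inter, filter_univ_mem, Fintype.card_fin]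
    rw [le_div_iff₀ (by exact_mod_cast (by omega : 0 < m))]
    linarith
end

section
/- Let m, k, t be positive integers with k·t ≤ m and 2k ≤ m. Let ν be the distribution of a tuple (R₁,…,R_t) of mutually independent random k-element subsets of {1,…,m}, each uniformly distributed on all k-element subsets, and let σ be the uniform distribution on the set of t-tuples (S₁,…,S_t) of pairwise disjoint k-element subsets of {1,…,m}. Then the statistical distance between ν and σ satisfies δ(ν,σ) ≤ k²·t²/(m − k). -/
/-! σ is ν conditioned on the event `D` that the tuple is pairwise disjoint, so
`|ν(B) - σ(B)| ≤ ν(Dᶜ)` for every event `B`. A tuple outside `D` has a pair `i ≠ j` with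
`Rᵢ ∩ Rⱼ ≠ ∅`, and `E |Rᵢ ∩ Rⱼ| = m (k/m)² = k²/m`; the union bound over the ordered pairs gives
`ν(Dᶜ) ≤ t²k²/m ≤ k²t²/(m - k)`. -/

open Finset

/-- The product of `t` independent uniform distributions on `k`-element subsets of
`{1,…,m}`: every `t`-tuple gets probability `1 / |KSubset m k|^t`. -/
noncomputable def productUniform (m k t : ℕ) : (Fin t → KSubset m k) → ℝ :=
  fun _ => 1 / (Fintype.card (KSubset m k) : ℝ) ^ t

/-- The uniform distribution on `t`-tuples of pairwise disjoint `k`-element subsets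
of `{1,…,m}`. -/
noncomputable def uniformDisjoint (m k t : ℕ) : (Fin t → KSubset m k) → ℝ :=
  fun S =>
    if ∀ i j, i ≠ j → Disjoint (S i).1 (S j).1 then
      1 / ((Finset.univ.filter
        (fun S' : Fin t → KSubset m k => ∀ i j, i ≠ j → Disjoint (S' i).1 (S' j).1)).card : ℝ)
    else 0

theorem Fintype.sum_apply_eval {ι X M : Type*} [Fintype ι] [DecidableEq ι] [Fintype X]
    [AddCommMonoid M] (j : ι) (h : X → M) :
    ∑ S : ι → X, h (S j) = Fintype.card X ^ (Fintype.card ι - 1) • ∑ x, h x := by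
  rw [← (Equiv.piSplitAt j fun _ => X).symm.sum_comp, Fintype.sum_prod_type]
  simp only [Equiv.piSplitAt, Equiv.symm_mk, Equiv.coe_fn_mk, ↓reduceDIte, sum_const,
    card_univ, card_pi, prod_const, card_subtype_compl, card_unique, smul_sum]

theorem Fintype.sum_apply_eval_apply_eval {ι X M : Type*} [Fintype ι] [DecidableEq ι]
    [Fintype X] [AddCommMonoid M] {i j : ι} (hij : i ≠ j) (g : X → X → M) :
    ∑ S : ι → X, g (S i) (S j) = Fintype.card X ^ (Fintype.card ι - 2) • ∑ x, ∑ y, g x y := by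
  rw [← (Equiv.piSplitAt i fun _ => X).symm.sum_comp, Fintype.sum_prod_type]
  have := fun x => Fintype.sum_apply_eval (ι := {l // l ≠ i}) ⟨j, hij.symm⟩ (g x)
  simp only [Equiv.piSplitAt, Equiv.symm_mk, Equiv.coe_fn_mk, ↓reduceDIte, hij.symm, this,
    card_subtype_compl, card_unique, smul_sum, Nat.sub_sub]

theorem abs_card_div_sub_card_inter_div_le {α : Type*} [Fintype α] [DecidableEq α]
    {D : Finset α} (hD : D.Nonempty) (B : Finset α) :
    |(#B : ℝ) / Fintype.card α - #(B ∩ D) / #D| ≤ #Dᶜ / Fintype.card α := by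
  have hd : (0 : ℝ) < #D := by exact_mod_cast hD.card_pos
  have hdn : (#D : ℝ) + #Dᶜ = Fintype.card α := by exact_mod_cast card_add_card_compl D
  have hba : (#(B ∩ D) : ℝ) ≤ #B := by exact_mod_cast card_le_card inter_subset_left
  have hbd : (#(B ∩ D) : ℝ) ≤ #D := by exact_mod_cast card_le_card inter_subset_right
  have habc : (#B : ℝ) ≤ #(B ∩ D) + #Dᶜ := by
    have := card_inter_add_card_sdiff B D
    have : #(B \ D) ≤ #Dᶜ := card_le_card fun x hx => by simp_all
    exact_mod_cast (by omega : #B ≤ #(B ∩ D) + #Dᶜ)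
  have hc : (0 : ℝ) ≤ #Dᶜ := Nat.cast_nonneg _
  have hn : (0 : ℝ) < Fintype.card α := by linarith
  have h₁ : #B * #D - Fintype.card α * #(B ∩ D) ≤ (#Dᶜ * #D : ℝ) := by
    nlinarith [mul_le_mul_of_nonneg_right habc hd.le]
  have h₂ : #(B ∩ D) * Fintype.card α - #D * #B ≤ (#Dᶜ * #D : ℝ) := by
    nlinarith [mul_le_mul_of_nonneg_left hbd hc]
  rw [abs_sub_le_iff, div_sub_div _ _ hn.ne' hd.ne', div_sub_div _ _ hd.ne' hn.ne',
    div_le_div_iff₀ (by positivity) hn, div_le_div_iff₀ (by positivity) hn]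
  constructor <;> nlinarith

lemma card_filter_mem_powersetCard_univ {α : Type*} [Fintype α] [DecidableEq α] {k : ℕ}
    (hk : 1 ≤ k) (x : α) :
    #{b ∈ powersetCard k (univ : Finset α) | x ∈ b} = (Fintype.card α - 1).choose (k - 1) := by
  simpa using card_filter_powersetCard_subset {x} univ k (subset_univ _) (by simpa using hk)

lemma Nat.choose_pred_mul {m k : ℕ} (hk : 1 ≤ k) :
    (m - 1).choose (k - 1) * m = k * m.choose k := by
  obtain ⟨k, rfl⟩ := Nat.exists_eq_add_of_le' hk
  rcases m with _ | m
  · simp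
  · simpa [mul_comm] using Nat.add_one_mul_choose_eq m k

section KSubset

variable {m k t : ℕ}

def disjointTuples (m k t : ℕ) : Finset (Fin t → KSubset m k) :=
  univ.filter fun S => ∀ i j, i ≠ j → Disjoint (S i).1 (S j).1

lemma sum_card_inter_ksubset (hk : 1 ≤ k) (a : Finset (Fin m)) :
    ∑ b : KSubset m k, #(a ∩ b.1) = #a * (m - 1).choose (k - 1) := by
  rw [← sum_subtype (powersetCard k univ) (by simp) (fun b => #(a ∩ b))]
  exact sum_card_inter fun x _ => by simpa using card_filter_mem_powersetCard_univ hk x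

lemma card_not_disjoint_le (hk : 1 ≤ k) {i j : Fin t} (hij : i ≠ j) :
    #{S : Fin t → KSubset m k | ¬Disjoint (S i).1 (S j).1} ≤
      Fintype.card (KSubset m k) ^ (t - 2) *
        (Fintype.card (KSubset m k) * (k * (m - 1).choose (k - 1))) :=
  calc #{S : Fin t → KSubset m k | ¬Disjoint (S i).1 (S j).1}
      ≤ ∑ S : Fin t → KSubset m k, #((S i).1 ∩ (S j).1) := by
        rw [card_filter]
        refine sum_le_sum fun S _ => ?_
        split_ifs with h
        · exact Nat.zero_le _
        · exact card_pos.2 (not_disjoint_iff_nonempty_inter.1 h)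
    _ = _ := by
        rw [Fintype.sum_apply_eval_apply_eval hij (fun a b : KSubset m k => #(a.1 ∩ b.1)),
          smul_eq_mul, Fintype.card_fin]
        simp only [sum_card_inter_ksubset hk, fun b : KSubset m k => b.2, sum_const, card_univ,
          smul_eq_mul]

lemma card_not_disjoint_mul_le (hk : 1 ≤ k) {i j : Fin t} (hij : i ≠ j) :
    #{S : Fin t → KSubset m k | ¬Disjoint (S i).1 (S j).1} * m ≤
      k ^ 2 * Fintype.card (KSubset m k) ^ t := by
  have ht : t - 2 + 2 = t := by
    have := Fin.val_ne_of_ne hij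
    omega
  calc #{S : Fin t → KSubset m k | ¬Disjoint (S i).1 (S j).1} * m
      ≤ Fintype.card (KSubset m k) ^ (t - 2) *
          (Fintype.card (KSubset m k) * (k * (m - 1).choose (k - 1))) * m :=
        Nat.mul_le_mul_right _ (card_not_disjoint_le hk hij)
    _ = k ^ 2 * Fintype.card (KSubset m k) ^ t := by
        rw [mul_assoc, mul_assoc, mul_assoc, Nat.choose_pred_mul hk, Fintype.card_finset_len,
          Fintype.card_fin]
        conv_rhs => rw [← ht]
        ring

lemma card_compl_disjointTuples_mul_le (hk : 1 ≤ k) :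
    #(disjointTuples m k t)ᶜ * m ≤ t ^ 2 * k ^ 2 * Fintype.card (KSubset m k) ^ t := by
  have hsub : (disjointTuples m k t)ᶜ ⊆ (univ : Finset (Fin t)).offDiag.biUnion
      fun p => {S : Fin t → KSubset m k | ¬Disjoint (S p.1).1 (S p.2).1} := by
    intro S hS
    simpa [disjointTuples] using hS
  calc #(disjointTuples m k t)ᶜ * m
      ≤ (∑ p ∈ (univ : Finset (Fin t)).offDiag,
          #{S : Fin t → KSubset m k | ¬Disjoint (S p.1).1 (S p.2).1}) * m :=
        Nat.mul_le_mul_right _ ((card_le_card hsub).trans card_biUnion_le)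
    _ ≤ ∑ p ∈ (univ : Finset (Fin t)).offDiag, k ^ 2 * Fintype.card (KSubset m k) ^ t := by
        rw [sum_mul]
        exact sum_le_sum fun p hp => card_not_disjoint_mul_le hk (mem_offDiag.1 hp).2.2
    _ ≤ t ^ 2 * k ^ 2 * Fintype.card (KSubset m k) ^ t := by
        rw [sum_const, smul_eq_mul, offDiag_card, card_univ, Fintype.card_fin, mul_assoc]
        exact Nat.mul_le_mul_right _ ((Nat.sub_le _ _).trans (Nat.pow_two t).ge)

lemma disjointTuples_nonempty (hkt : k * t ≤ m) : (disjointTuples m k t).Nonempty := by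
  let e : Fin t × Fin k ↪ Fin m :=
    finProdFinEquiv.toEmbedding.trans (Fin.castLEEmb (by rw [mul_comm]; exact hkt))
  refine ⟨fun i => ⟨univ.map ⟨fun j => e (i, j), fun j j' h => by simpa using e.injective h⟩,
    by simp⟩, ?_⟩
  simp only [disjointTuples, mem_filter, mem_univ, true_and]
  intro i j hij
  rw [disjoint_left]
  simp only [mem_map, mem_univ, true_and, not_exists]
  rintro _ ⟨a, rfl⟩ b h
  exact hij (congrArg Prod.fst (e.injective h)).symm

lemma sum_productUniform (B : Finset (Fin t → KSubset m k)) :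
    ∑ S ∈ B, productUniform m k t S = #B / Fintype.card (Fin t → KSubset m k) := by
  simp [productUniform, div_eq_mul_inv]

lemma sum_uniformDisjoint (B : Finset (Fin t → KSubset m k)) :
    ∑ S ∈ B, uniformDisjoint m k t S = #(B ∩ disjointTuples m k t) / #(disjointTuples m k t) := by
  simp only [uniformDisjoint]
  rw [sum_ite, sum_const_zero, add_zero, sum_const, nsmul_eq_mul, mul_one_div,
    disjointTuples, inter_filter, inter_univ]

end KSubset

theorem statistical_distance_bound_general (m k t : ℕ) (hk : 1 ≤ k)
    (hkt : k * t ≤ m) (h2k : 2 * k ≤ m) :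
    ∀ B : Finset (Fin t → KSubset m k),
      |∑ S ∈ B, productUniform m k t S - ∑ S ∈ B, uniformDisjoint m k t S| ≤
        ((k : ℝ) ^ 2 * (t : ℝ) ^ 2) / ((m : ℝ) - (k : ℝ)) := by
  intro B
  have hD := disjointTuples_nonempty hkt
  have hn : (0 : ℝ) < Fintype.card (Fin t → KSubset m k) := by
    exact_mod_cast hD.card_pos.trans_le (card_le_univ _)
  have hmk : (0 : ℝ) < m - k := by
    rw [sub_pos]
    exact_mod_cast (by omega : k < m)
  have hbad : ((#(disjointTuples m k t)ᶜ * m : ℕ) : ℝ) ≤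
      ((t ^ 2 * k ^ 2 * Fintype.card (Fin t → KSubset m k) : ℕ) : ℝ) := by
    rw [Fintype.card_fun, Fintype.card_fin]
    exact_mod_cast card_compl_disjointTuples_mul_le hk
  push_cast at hbad
  rw [sum_productUniform, sum_uniformDisjoint]
  calc _ ≤ (#(disjointTuples m k t)ᶜ : ℝ) / Fintype.card (Fin t → KSubset m k) :=
        abs_card_div_sub_card_inter_div_le hD B
    _ ≤ (t : ℝ) ^ 2 * k ^ 2 / m := by
        rw [div_le_div_iff₀ hn (by linarith)]
        linarith
    _ ≤ (k : ℝ) ^ 2 * t ^ 2 / (m - k) := by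
        rw [mul_comm]
        gcongr
        linarith

/-- Let `m, k, t` be positive integers with `k·t ≤ m` and `2k ≤ m`.
Let `ν` be the distribution of a tuple `(R₁,…,R_t)` of mutually independent uniformly
random `k`-element subsets of `{1,…,m}`, and let `σ` be the uniform distribution on
`t`-tuples of pairwise disjoint `k`-element subsets. Then the statistical distance
satisfies `δ(ν,σ) ≤ k²·t²/(m − k)`, i.e. `|ν(B) − σ(B)| ≤ k²·t²/(m − k)` for every
event `B`. -/
theorem statistical_distance_bound (m k t : ℕ) (hk : 1 ≤ k) (ht : 1 ≤ t) (hm : 1 ≤ m)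
    (hkt : k * t ≤ m) (h2k : 2 * k ≤ m) :
    ∀ B : Finset (Fin t → KSubset m k),
      |∑ S ∈ B, productUniform m k t S - ∑ S ∈ B, uniformDisjoint m k t S| ≤
        ((k : ℝ) ^ 2 * (t : ℝ) ^ 2) / ((m : ℝ) - (k : ℝ)) :=
  statistical_distance_bound_general m k t hk hkt h2k
end

section
/- For all natural numbers m, k with 100·k ≤ 99·m, one has the real inequality C(m, k) ≥ 2^{k/100} · C(⌊99m/100⌋, k), where C(·,·) denotes the binomial coefficient and 2^{k/100} is the real power. -/
lemma desc_key (m k : ℕ) (hkm : 100 * k ≤ 99 * m) :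
    100 ^ k * ((99 * m / 100).descFactorial k) ≤ 99 ^ k * m.descFactorial k := by
  set n := 99 * m / 100 with hn
  have hnm : 100 * n ≤ 99 * m := by
    rw [hn, mul_comm]; exact Nat.div_mul_le_self (99 * m) 100
  rw [Nat.descFactorial_eq_prod_range, Nat.descFactorial_eq_prod_range]
  calc 100 ^ k * ∏ i ∈ Finset.range k, (n - i)
      = ∏ i ∈ Finset.range k, 100 * (n - i) := by
        rw [Finset.prod_mul_distrib, Finset.prod_const, Finset.card_range]
    _ ≤ ∏ i ∈ Finset.range k, 99 * (m - i) := by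
        apply Finset.prod_le_prod'
        intro i hi
        have : i < k := Finset.mem_range.mp hi
        omega
    _ = 99 ^ k * ∏ i ∈ Finset.range k, (m - i) := by
        rw [Finset.prod_mul_distrib, Finset.prod_const, Finset.card_range]

/-- For all natural numbers `m, k` with `100·k ≤ 99·m`, one has the
real inequality `C(m, k) ≥ 2^(k/100) · C(⌊99m/100⌋, k)`, where `C` is the binomial
coefficient and `2^(k/100)` is the real power. -/
theorem binomial_ratio_lower_bound (m k : ℕ) (hkm : 100 * k ≤ 99 * m) :
    (2 : ℝ) ^ ((k : ℝ) / 100) * ((99 * m / 100 : ℕ).choose k : ℝ) ≤ (m.choose k : ℝ) := by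
  set n := 99 * m / 100 with hn
  -- step 1: 100^k * C(n,k) ≤ 99^k * C(m,k) in ℝ
  have hnat := desc_key m k hkm
  rw [Nat.descFactorial_eq_factorial_mul_choose, Nat.descFactorial_eq_factorial_mul_choose] at hnat
  have hfac : (0 : ℝ) < (k.factorial : ℝ) := by exact_mod_cast k.factorial_pos
  have h1 : (100 : ℝ) ^ k * (n.choose k : ℝ) ≤ 99 ^ k * (m.choose k : ℝ) := by
    have := (Nat.cast_le (α := ℝ)).mpr hnat
    push_cast at this
    nlinarith [this, hfac]
  -- step 2: 2^(k/100) ≤ (100/99)^k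
  have hb : (2 : ℝ) ^ ((1 : ℝ) / 100) ≤ 100 / 99 := by
    have h100 : ((2 : ℝ) ^ ((1 : ℝ) / 100)) ^ (100 : ℕ) ≤ (100 / 99 : ℝ) ^ (100 : ℕ) := by
      rw [← Real.rpow_natCast ((2 : ℝ) ^ ((1 : ℝ) / 100)) 100, ← Real.rpow_mul (by norm_num)]
      norm_num
    exact le_of_pow_le_pow_left₀ (by norm_num) (by norm_num) h100
  have h2 : (2 : ℝ) ^ ((k : ℝ) / 100) ≤ (100 / 99 : ℝ) ^ k := by
    have : (2 : ℝ) ^ ((k : ℝ) / 100) = ((2 : ℝ) ^ ((1 : ℝ) / 100)) ^ k := by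
      rw [← Real.rpow_natCast ((2 : ℝ) ^ ((1 : ℝ) / 100)) k, ← Real.rpow_mul (by norm_num)]
      ring_nf
    rw [this]
    exact pow_le_pow_left₀ (Real.rpow_nonneg (by norm_num) _) hb k
  have hcnn : (0 : ℝ) ≤ (n.choose k : ℝ) := Nat.cast_nonneg _
  calc (2 : ℝ) ^ ((k : ℝ) / 100) * (n.choose k : ℝ)
      ≤ (100 / 99 : ℝ) ^ k * (n.choose k : ℝ) := by
        exact mul_le_mul_of_nonneg_right h2 hcnn
    _ = (100 : ℝ) ^ k * (n.choose k : ℝ) / 99 ^ k := by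
        rw [div_pow]; ring
    _ ≤ 99 ^ k * (m.choose k : ℝ) / 99 ^ k := by
        apply div_le_div_of_nonneg_right h1 (by positivity) |>.trans_eq rfl
    _ = (m.choose k : ℝ) := by
        field_simp
end

section
/- There exists q₀ such that for every odd prime power q ≥ q₀ the following holds. Let F be a finite field with q² elements, identify F_q with the subfield {x ∈ F : x^q = x}, and fix w ∈ F with w ∉ F_q. Define c : F_q × F_q → {0,1} by c(a,b) = 1 if 1 + w·a is a square in F, and c(a,b) = 0 otherwise. Then: (i) c is balanced, i.e., q²/3 ≤ |{(a,b) ∈ F_q × F_q : c(a,b) = 1}| ≤ 2q²/3; and (ii) for all distinct pairs (x,y), (u,v) ∈ F_q × F_q and every (a,b) ∈ F_q × F_q with a·x = b + y and a·u = b + v, the element (x + y·w) − (u + v·w) of F is a square in F if and only if 1 + w·a is a square in F. -/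
/-!
The fixed field `K = {x | x ^ q = x}` of the Frobenius involution `x ↦ x ^ q` of `F` satisfies
`F = K ⊕ K w`, so `#K = q`, and Euler's criterion shows that every element of `K` is a square
in `F`. Hence `s + t w` with `s ≠ 0` is a square iff `1 + w (t / s)` is, and summing the
quadratic character `χ` of `F` (whose total sum is `0`) over `F = K × K` gives
`∑ a ∈ K, χ (1 + w a) = -χ w`. So exactly `(q ∓ 1) / 2` elements `a ∈ K` make `1 + w a` a
square, which is (i). For (ii), `(x + y w) - (u + v w) = (x - u) (1 + w a)` with `x - u` a
nonzero element of `K`.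
-/

namespace Subfield

variable {F : Type*} [Field F]

theorem add_mul_injective (K : Subfield F) {w : F} (hw : w ∉ K) :
    Function.Injective fun p : K × K => (p.1 : F) + p.2 * w := by
  rintro ⟨s, t⟩ ⟨s', t'⟩ h
  simp only at h
  obtain rfl | ht := eq_or_ne t t'
  · simp_all
  have ht' : (t' : F) - t ≠ 0 := sub_ne_zero.mpr (by exact_mod_cast ht.symm)
  refine absurd ?_ hw
  have hw' : w = (s - s') / (t' - t) := by
    field_simp
    linear_combination -h
  rw [hw']
  exact K.div_mem (K.sub_mem s.2 s'.2) (K.sub_mem t'.2 t.2)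

theorem add_mul_surjective_of_involutive (σ : F →+* F) (hσ : Function.Involutive σ) {w : F}
    (hw : σ w ≠ w) :
    Function.Surjective fun p : σ.eqLocusField (RingHom.id F) × σ.eqLocusField (RingHom.id F) =>
      (p.1 : F) + p.2 * w := by
  intro z
  have hw' : w - σ w ≠ 0 := sub_ne_zero.mpr hw.symm
  -- apply `σ` to `z = s + t w` and subtract
  set t := (z - σ z) / (w - σ w) with ht
  have hσt : σ t = t := by
    rw [ht, map_div₀, map_sub, map_sub, hσ z, hσ w, ← neg_sub z, ← neg_sub w, neg_div_neg_eq]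
  have hσs : σ (z - t * w) = z - t * w := by
    have : t * (w - σ w) = z - σ z := by rw [ht]; field_simp
    rw [map_sub, map_mul, hσt]
    linear_combination this
  exact ⟨(⟨z - t * w, hσs⟩, ⟨t, hσt⟩), by simp⟩

theorem card_sq_eq_of_bijective_add_mul [Fintype F] (K : Subfield F) [Fintype K] {w : F}
    (hbij : Function.Bijective fun p : K × K => (p.1 : F) + p.2 * w) :
    Fintype.card K ^ 2 = Fintype.card F := by
  rw [sq, ← Fintype.card_prod]
  exact Fintype.card_of_bijective hbij

theorem isSquare_of_mem [Fintype F] (hF : ringChar F ≠ 2) (K : Subfield F) [Fintype K]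
    (hK : Fintype.card K ^ 2 = Fintype.card F) {k : F} (hk : k ∈ K) : IsSquare k := by
  obtain rfl | hk0 := eq_or_ne k 0
  · exact ⟨0, by simp⟩
  obtain ⟨m, hm⟩ : Odd (Fintype.card K) := by
    rw [← Nat.odd_pow_iff two_ne_zero, hK]
    exact Nat.odd_iff.mpr (FiniteField.odd_card_of_char_ne_two hF)
  have hk1 : k ^ (2 * m) = 1 := by
    have := FiniteField.pow_card_sub_one_eq_one (⟨k, hk⟩ : K) fun h => hk0 congr(Subtype.val $h)
    simpa [hm] using congr(Subtype.val $this)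
  have hexp : (2 * m + 1) ^ 2 / 2 = 2 * m * (m + 1) := by
    have : (2 * m + 1) ^ 2 = 2 * (2 * m * (m + 1)) + 1 := by ring
    omega
  rw [FiniteField.isSquare_iff hF hk0, ← hK, hm, hexp, pow_mul, hk1, one_pow]

theorem sum_quadraticChar_one_add_mul [Fintype F] [DecidableEq F] (hF : ringChar F ≠ 2)
    (K : Subfield F) [Fintype K] (hsq : ∀ k ∈ K, IsSquare k) {w : F}
    (hbij : Function.Bijective fun p : K × K => (p.1 : F) + p.2 * w) :
    ∑ a : K, quadraticChar F (1 + w * a) = -quadraticChar F w := by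
  classical
  set χ := quadraticChar F
  have hχK : ∀ k : K, k ≠ 0 → χ k = 1 := fun k hk =>
    (quadraticChar_one_iff_isSquare (by exact_mod_cast hk)).mpr (hsq k k.2)
  have hrow : ∀ s : K, s ≠ 0 → ∑ t : K, χ (s + t * w) = ∑ a : K, χ (1 + w * a) := by
    intro s hs
    have hs' : (s : F) ≠ 0 := by exact_mod_cast hs
    refine Fintype.sum_equiv (Equiv.mulRight₀ s⁻¹ (inv_ne_zero hs)) _ _ fun t => ?_
    rw [show (s : F) + t * w = s * (1 + w * ↑(t * s⁻¹)) by push_cast; field_simp,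
      map_mul, hχK s hs, one_mul]
    rfl
  have hrow₀ : ∑ t : K, χ ((0 : K) + t * w) = ∑ t ∈ ({0}ᶜ : Finset K), χ w := by
    rw [Fintype.sum_eq_add_sum_compl 0]
    simp only [ZeroMemClass.coe_zero, zero_mul, zero_add, MulChar.map_zero]
    refine Finset.sum_congr rfl fun t ht => ?_
    rw [map_mul, hχK t (by simpa using ht), one_mul]
  have htotal : ∑ s : K, ∑ t : K, χ (s + t * w) = 0 := by
    rw [← Fintype.sum_prod_type', hbij.sum_comp χ, quadraticChar_sum_zero hF]
  rw [Fintype.sum_eq_add_sum_compl 0, hrow₀,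
    Finset.sum_congr rfl fun s hs => hrow s (by simpa using hs), Finset.sum_const,
    Finset.sum_const, ← smul_add] at htotal
  have hn : ({0}ᶜ : Finset K).card ≠ 0 := by
    rw [Finset.card_compl, Finset.card_singleton]
    have := Fintype.one_lt_card (α := K)
    omega
  linear_combination (smul_eq_zero.mp htotal).resolve_left hn

theorem two_mul_card_isSquare_one_add_mul [Fintype F] [DecidableEq F] (hF : ringChar F ≠ 2)
    (K : Subfield F) [Fintype K] (hsq : ∀ k ∈ K, IsSquare k) {w : F}
    (hbij : Function.Bijective fun p : K × K => (p.1 : F) + p.2 * w) :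
    2 * (Nat.card {a : K // IsSquare (1 + w * a)} : ℤ) =
      Fintype.card K - quadraticChar F w := by
  classical
  -- `1 + a w = 0 + 0 w` would contradict uniqueness of coordinates
  have hne : ∀ a : K, 1 + w * a ≠ 0 := fun a h => one_ne_zero congr(Prod.fst $(hbij.1
    (a₁ := (1, a)) (a₂ := (0, 0)) (by simpa [mul_comm] using h)))
  have hχ : ∀ a : K, quadraticChar F (1 + w * a) =
      2 * (if IsSquare (1 + w * (a : F)) then 1 else 0) - 1 := fun a => by
    split_ifs with h
    · rw [(quadraticChar_one_iff_isSquare (hne a)).mpr h]; norm_num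
    · rw [quadraticChar_neg_one_iff_not_isSquare.mpr h]; norm_num
  have hsum := sum_quadraticChar_one_add_mul hF K hsq hbij
  simp only [hχ, Finset.sum_sub_distrib, ← Finset.mul_sum, Finset.sum_boole, Finset.sum_const,
    Finset.card_univ, nsmul_eq_mul, mul_one] at hsum
  rw [Nat.card_eq_fintype_card, Fintype.card_subtype]
  linear_combination hsum

theorem isSquare_sub_iff_isSquare_one_add_mul {K : Subfield F} (hsq : ∀ k ∈ K, IsSquare k)
    {w x y u v a b : F} (hx : x ∈ K) (hu : u ∈ K) (hne : (x, y) ≠ (u, v))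
    (h₁ : a * x = b + y) (h₂ : a * u = b + v) :
    IsSquare (x + y * w - (u + v * w)) ↔ IsSquare (1 + w * a) := by
  have hxu : x - u ≠ 0 := fun h => hne <| by
    obtain rfl : x = u := sub_eq_zero.mp h
    obtain rfl : y = v := by linear_combination h₂ - h₁
    rfl
  have hsq' : IsSquare (x - u) := hsq _ (K.sub_mem hx hu)
  rw [show x + y * w - (u + v * w) = (x - u) * (1 + w * a) by linear_combination w * (h₂ - h₁)]
  exact ⟨fun h => by simpa [hxu] using h.div hsq', hsq'.mul⟩

end Subfield

theorem Set.natCard_subtype_prod {α β : Type*} (s : Set α) (t : Set β) (P : α → Prop) :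
    Nat.card {p : α × β // p.1 ∈ s ∧ p.2 ∈ t ∧ P p.1} = Nat.card {a : s // P a} * Nat.card t :=
  (Nat.card_congr
    { toFun p := (⟨⟨p.1.1, p.2.1⟩, p.2.2.2⟩, ⟨p.1.2, p.2.2.1⟩)
      invFun x := ⟨(x.1.1.1, x.2.1), x.1.1.2, x.2.2, x.1.2⟩
      left_inv _ := rfl
      right_inv _ := rfl }).trans (Nat.card_prod _ _)

namespace FiniteField

variable {F : Type*} [Field F] [Fintype F]

theorem exists_eq_ringChar_pow {q n : ℕ} (hq : IsPrimePow q) (hcard : Fintype.card F = q ^ n) :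
    ∃ k, q = ringChar F ^ k := by
  obtain ⟨p, k, hp, -, rfl⟩ := hq
  have hchar : (ringChar F).Prime := CharP.char_is_prime F (ringChar F)
  have hdvd : ringChar F ∣ (p ^ k) ^ n := hcard ▸ ringChar.dvd (FiniteField.cast_card_eq_zero F)
  rw [← pow_mul] at hdvd
  have hp' : ringChar F = p :=
    (Nat.prime_dvd_prime_iff_eq hchar hp.nat_prime).mp (hchar.dvd_of_dvd_pow hdvd)
  exact ⟨k, by rw [hp']⟩

theorem ringChar_ne_two_of_odd_card (hodd : Odd (Fintype.card F)) : ringChar F ≠ 2 :=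
  fun h => Nat.not_even_iff_odd.mpr hodd (Nat.even_iff.mpr (even_card_iff_char_two.mp h))

theorem iterateFrobenius_involutive {p k : ℕ} [ExpChar F p]
    (hcard : Fintype.card F = (p ^ k) ^ 2) : Function.Involutive (iterateFrobenius F p k) :=
  fun x => by
    rw [iterateFrobenius_def, iterateFrobenius_def, ← pow_mul, ← sq, ← hcard, pow_card]

end FiniteField

/-- There exists `q₀` such that for every odd prime power `q ≥ q₀` the
following holds. Let `F` be a finite field with `q²` elements, identify `F_q` with the
subfield `{x ∈ F : x^q = x}`, and fix `w ∈ F` with `w ∉ F_q`. Define `c : F_q × F_q → {0,1}`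
by `c(a,b) = 1` iff `1 + w·a` is a square in `F`. Then:
(i) `c` is balanced, i.e. `q²/3 ≤ |c⁻¹(1)| ≤ 2q²/3`; and
(ii) for all distinct pairs `(x,y), (u,v) ∈ F_q × F_q` and every `(a,b) ∈ F_q × F_q` with
`a·x = b + y` and `a·u = b + v`, the element `(x + y·w) − (u + v·w)` is a square in `F`
iff `1 + w·a` is a square in `F`. -/
theorem balanced_coloring_from_squares :
    ∃ q₀ : ℕ, ∀ q : ℕ, q₀ ≤ q → Odd q → IsPrimePow q →
      ∀ (F : Type) [Field F] [Fintype F], Fintype.card F = q ^ 2 →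
        ∀ w : F, w ^ q ≠ w →
          ((q ^ 2 ≤ 3 * Nat.card {p : F × F //
              p.1 ^ q = p.1 ∧ p.2 ^ q = p.2 ∧ IsSquare (1 + w * p.1)} ∧
            3 * Nat.card {p : F × F //
              p.1 ^ q = p.1 ∧ p.2 ^ q = p.2 ∧ IsSquare (1 + w * p.1)} ≤ 2 * q ^ 2) ∧
          ∀ x y u v a b : F,
            x ^ q = x → y ^ q = y → u ^ q = u → v ^ q = v → a ^ q = a → b ^ q = b →
            (x, y) ≠ (u, v) → a * x = b + y → a * u = b + v →
            (IsSquare ((x + y * w) - (u + v * w)) ↔ IsSquare (1 + w * a))) := by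
  refine ⟨3, fun q hq3 hodd hq F _ _ hcard w hw => ?_⟩
  classical
  obtain ⟨k, rfl⟩ := FiniteField.exists_eq_ringChar_pow hq hcard
  have : Fact (ringChar F).Prime := ⟨CharP.char_is_prime F _⟩
  set σ := iterateFrobenius F (ringChar F) k
  set K := σ.eqLocusField (RingHom.id F)
  have hbij : Function.Bijective fun p : K × K => (p.1 : F) + p.2 * w :=
    ⟨K.add_mul_injective hw, Subfield.add_mul_surjective_of_involutive σ
      (FiniteField.iterateFrobenius_involutive hcard) hw⟩
  have hK2 := K.card_sq_eq_of_bijective_add_mul hbij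
  have hKq : Fintype.card K = ringChar F ^ k := Nat.pow_left_injective two_ne_zero (hK2.trans hcard)
  have hF := FiniteField.ringChar_ne_two_of_odd_card (hcard ▸ hodd.pow)
  have hsq : ∀ z ∈ K, IsSquare z := fun _ => Subfield.isSquare_of_mem hF K hK2
  refine ⟨?_, fun x y u v a b hx _ hu _ _ _ hne h₁ h₂ =>
    Subfield.isSquare_sub_iff_isSquare_one_add_mul hsq hx hu hne h₁ h₂⟩
  have hA := Subfield.two_mul_card_isSquare_one_add_mul hF K hsq hbij
  have hAq : ringChar F ^ k ≤ 3 * Nat.card {a : K // IsSquare (1 + w * a)} ∧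
      3 * Nat.card {a : K // IsSquare (1 + w * a)} ≤ 2 * ringChar F ^ k := by
    have hw0 : w ≠ 0 := fun h => hw (by rw [h]; exact map_zero σ)
    rw [hKq] at hA
    rcases quadraticChar_dichotomy hw0 with h | h <;> rw [h] at hA <;> omega
  have hN : Nat.card {p : F × F // p.1 ^ ringChar F ^ k = p.1 ∧ p.2 ^ ringChar F ^ k = p.2 ∧
      IsSquare (1 + w * p.1)} = Nat.card {a : K // IsSquare (1 + w * a)} * Nat.card K :=
    Set.natCard_subtype_prod (K : Set F) (K : Set F) fun a => IsSquare (1 + w * a)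
  rw [hN, Nat.card_eq_fintype_card (α := K), hKq, sq]
  exact ⟨by nlinarith [hAq.1], by nlinarith [hAq.2]⟩
end
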